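/- Let Γ ⊢ M : T be a simply-typed term-in-context and let ⌊M⌋ denote its eta-long form with respect to T. Then the set of STLC traversals of ⌊M⌋ (generated by the rules of Table 1 excluding rule Lam^ghost and the eta-expanded subcases of rules Var and IVar) equals the set of traversals of ⌊M⌋ generated by the rules of Table 1 excluding only the eta-expanded subcase of rule IVar; in particular, the condition i > |m| in rule Var never arises while traversing ⌊M⌋ and no traversal in this set contains a ghost node. -/

import Mathlib

/-!
An η-long typing of the term types every node of its computation tree: a λ-node binds one
variable per argument of its type, and every variable or @-node has one operand per argument
type of its head. Traversals respect this typing. In the part of a traversal hereditarily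
justified by an @-node, a λ-node has the type of the head of the node visited just before it;
so when a variable `n` points with label `k` to a λ-node whose predecessor is `m`, the type of
`n` is the `k`-th argument type of `m`. Hence `k ≤ |m|`: the eta-expanded subcase of rule Var
never applies, no ghost node is ever visited (rule Lam^ghost starts from one), and both rule
sets generate the same traversals. The remaining rule IVar acts in the part hereditarily
justified by the root, which the O-view never leaves, so it cannot break the invariant.
-/

set_option maxHeartbeats 1000000

namespace ULC

/-- Variable names. -/
abbrev Name := Nat
/-- Positions (directed paths) in trees / terms. -/
abbrev Pos := List Nat

/-! ## Untyped lambda terms `Λ ::= x | (Λ Λ) | λx.Λ` -/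

inductive Term where
  | var : Name → Term
  | app : Term → Term → Term
  | lam : Name → Term → Term
deriving DecidableEq

namespace Term

/-- Free variables of a term. -/
def fv : Term → List Name
  | var x => [x]
  | app u v => fv u ++ fv v
  | lam x u => (fv u).filter (· != x)

def size : Term → Nat
  | var _ => 1
  | app u v => size u + size v + 1
  | lam _ u => size u + 1

/-- Naive renaming of a free variable (used only with a fresh target). -/
def rename (y z : Name) : Term → Term
  | var w => var (if w = y then z else w)
  | app u v => app (rename y z u) (rename y z v)
  | lam w u => if w = y then lam w u else lam w (rename y z u)

theorem size_rename (y z : Name) : ∀ t : Term, (t.rename y z).size = t.size := by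
  intro t
  induction t with
  | var w => simp [rename, size]
  | app u v ihu ihv => simp [rename, size, ihu, ihv]
  | lam w u ih => by_cases h : w = y <;> simp [rename, size, h, ih]

/-- A name fresh for a given list of names. -/
def fresh (l : List Name) : Name := l.foldr max 0 + 1

/-- Capture-avoiding substitution `subst x s t = t[x := s]`. -/
def subst (x : Name) (s : Term) : Term → Term
  | var y => if y = x then s else var y
  | app u v => app (subst x s u) (subst x s v)
  | lam y u =>
      if y = x then lam y u
      else if y ∈ s.fv ∧ x ∈ u.fv then
        let z := fresh (s.fv ++ u.fv ++ [x, y])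
        lam z (subst x s (u.rename y z))
      else lam y (subst x s u)
termination_by t => t.size
decreasing_by
  all_goals simp only [size, size_rename]
  all_goals omega

end Term

/-! ## Beta reduction, alpha conversion -/

/-- One step of β-reduction. -/
inductive Beta : Term → Term → Prop where
  | redex (x : Name) (u v : Term) :
      Beta (.app (.lam x u) v) (Term.subst x v u)
  | appL {u u' : Term} (v : Term) : Beta u u' → Beta (.app u v) (.app u' v)
  | appR (u : Term) {v v' : Term} : Beta v v' → Beta (.app u v) (.app u v')
  | lamC (x : Name) {u u' : Term} : Beta u u' → Beta (.lam x u) (.lam x u')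

/-- α-equivalence. -/
inductive Alpha : Term → Term → Prop where
  | var (x : Name) : Alpha (.var x) (.var x)
  | app {u u' v v' : Term} :
      Alpha u u' → Alpha v v' → Alpha (.app u v) (.app u' v')
  | lam {x y : Name} {u u' : Term} :
      (∀ z, z ∉ u.fv → z ∉ u'.fv → Alpha (u.rename x z) (u'.rename y z)) →
      Alpha (.lam x u) (.lam y u')

/-- Many-step β-reduction. -/
def BetaStar : Term → Term → Prop := Relation.ReflTransGen Beta

/-- β-equivalence (as usual in the named λ-calculus, modulo α-conversion). -/
def BetaEq : Term → Term → Prop :=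
  Relation.EqvGen (fun a b => Beta a b ∨ Alpha a b)

/-- β-normal form: no redex, i.e. no β-step possible. -/
def IsBetaNormal (t : Term) : Prop := ∀ u, ¬ Beta t u

/-- `t` has a β-normal form. -/
def HasBnf (t : Term) : Prop := ∃ n, BetaStar t n ∧ IsBetaNormal n

/-! ## Head lambda-list, generalized redexes, lloc -/

namespace Term

/-- The head lambda-list `λ_l`. -/
def lamList : Term → List Name
  | var _ => []
  | lam x u => x :: lamList u
  | app u _ => (lamList u).tail

/-- Subterm at a position (0 = under a λ or operator of an app, 1 = operand). -/
def subtermAt : Term → Pos → Option Term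
  | t, [] => some t
  | lam _ u, 0 :: p => subtermAt u p
  | app u _, 0 :: p => subtermAt u p
  | app _ v, 1 :: p => subtermAt v p
  | _, _ => none

/-- Replace the subterm at a position. -/
def replaceAt : Term → Pos → Term → Term
  | _, [], s => s
  | lam x u, 0 :: p, s => lam x (replaceAt u p s)
  | app u v, 0 :: p, s => app (replaceAt u p s) v
  | app u v, 1 :: p, s => app u (replaceAt v p s)
  | t, _, _ => t

/-- Positions of the abstractions listed in the head lambda-list. -/
def lamListPos : Term → List Pos
  | var _ => []
  | lam _ u => ([] : Pos) :: (lamListPos u).map (fun q => 0 :: q)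
  | app u _ => ((lamListPos u).map (fun q => 0 :: q)).tail

/-- Generalized redexes: pairs (position of the λ-abstraction occurrence,
position of its argument). -/
def gr : Term → List (Pos × Pos)
  | var _ => []
  | lam _ u => (gr u).map (fun r => (0 :: r.1, 0 :: r.2))
  | app u v =>
      (match lamListPos u with
        | [] => []
        | q :: _ => [((0 :: q : Pos), ([1] : Pos))]) ++
      (gr u).map (fun r => (0 :: r.1, 0 :: r.2)) ++
      (gr v).map (fun r => (1 :: r.1, 1 :: r.2))

/-- Position of the binder of the variable occurrence at `p` (if bound). -/
def binderAux : Term → Pos → Pos → List (Name × Pos) → Option Pos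
  | var x, [], _, env => env.lookup x
  | lam y u, 0 :: p, cur, env => binderAux u p (cur ++ [0]) ((y, cur) :: env)
  | app u _, 0 :: p, cur, env => binderAux u p (cur ++ [0]) env
  | app _ v, 1 :: p, cur, env => binderAux v p (cur ++ [1]) env
  | _, _, _, _ => none

def binderOf (M : Term) (p : Pos) : Option Pos := binderAux M p [] []

/-- The variable occurrence at `p` is involved in a generalized redex of `M`. -/
def involvedB (M : Term) (p : Pos) : Bool :=
  M.gr.any (fun r => binderOf M p == some r.1)

def Involved (M : Term) (p : Pos) : Prop := involvedB M p = true

/-- The leftmost linear occurrence `lloc`. -/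
def llocAux (M : Term) : Term → Pos → Option Pos
  | var _, p => if involvedB M p then some p else none
  | lam _ u, p => llocAux M u (p ++ [0])
  | app u v, p =>
      match llocAux M u (p ++ [0]) with
      | some q => some q
      | none => if u.lamList = [] then llocAux M v (p ++ [1]) else none

def lloc (M : Term) : Option Pos := llocAux M M []

end Term

/-- Quasi normal form: no leftmost linear occurrence. -/
def Qnf (M : Term) : Prop := M.lloc = none

/-- Names bound somewhere in the term. -/
def Term.bndrs : Term → List Name
  | .var _ => []
  | .app u v => u.bndrs ++ v.bndrs
  | .lam x u => x :: u.bndrs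

/-- Barendregt convention: binder names are pairwise distinct and disjoint
from the free names. -/
def Barendregt (M : Term) : Prop :=
  M.bndrs.Nodup ∧ ∀ x ∈ M.bndrs, x ∉ M.fv

/-- One step of leftmost linear reduction: linearly fire the generalized
redex involving the lloc (working up to α-conversion, which realizes the
capture-avoiding renaming). -/
def LinStep (M N : Term) : Prop :=
  ∃ M', Alpha M M' ∧ Barendregt M' ∧
    ∃ p lp ap A, M'.lloc = some p ∧ Term.binderOf M' p = some lp ∧
      (lp, ap) ∈ M'.gr ∧ Term.subtermAt M' ap = some A ∧
      Alpha N (Term.replaceAt M' p A)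

/-- Firing a trivial redex `(λx.u)A` with `x ∉ fv u`. -/
def TrivStep (M N : Term) : Prop :=
  ∃ p x u A, Term.subtermAt M p = some (.app (.lam x u) A) ∧ x ∉ u.fv ∧
    N = Term.replaceAt M p u

def IsRedexAt (M : Term) (p : Pos) : Prop :=
  ∃ x u A, Term.subtermAt M p = some (.app (.lam x u) A)

def HasRedex (M : Term) : Prop := ∃ p, IsRedexAt M p

/-- `q` occurs (strictly) to the left of `p`. -/
def PosLeft (q p : Pos) : Prop :=
  (∃ r a b s₁ s₂, q = r ++ a :: s₁ ∧ p = r ++ b :: s₂ ∧ a < b) ∨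
  (q ≠ p ∧ q <+: p)

/-- A spinal-innermost redex: a β-redex whose operator body has no redex. -/
def SpinalInnermostAt (M : Term) (p : Pos) : Prop :=
  ∃ x u A, Term.subtermAt M p = some (.app (.lam x u) A) ∧ ¬ HasRedex u

/-- The leftmost spinal-innermost redex of `M` is at `p`. -/
def LSIAt (M : Term) (p : Pos) : Prop :=
  SpinalInnermostAt M p ∧ ∀ q, SpinalInnermostAt M q → ¬ PosLeft q p

/-- One step of the leftmost spinal-innermost reduction strategy. -/
def LSIStep (M N : Term) : Prop :=
  ∃ p x u A, LSIAt M p ∧ Term.subtermAt M p = some (.app (.lam x u) A) ∧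
    N = Term.replaceAt M p (Term.subst x A u)

/-! ## Head occurrence, hoc arguments, head reduction -/

/-- Position of the head (leftmost) variable occurrence. -/
def Term.hocPos : Term → Pos
  | .var _ => []
  | .lam _ u => 0 :: u.hocPos
  | .app u _ => 0 :: u.hocPos

/-- Quasi-head-normal form: the hoc is not involved in a generalized redex. -/
def Qhnf (M : Term) : Prop := ¬ Term.Involved M M.hocPos

/-- The arguments of the head variable occurrence. -/
def Term.args : Term → List Term
  | .var _ => []
  | .lam _ u => u.args
  | .app u v => if u.lamList = [] then u.args ++ [v] else u.args

def Term.headIsVar : Term → Prop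
  | .var _ => True
  | .app u _ => u.headIsVar
  | .lam _ _ => False

/-- Head normal form `λ x₁…xₙ. y A₁ … A_m`. -/
def IsHnf : Term → Prop
  | .var _ => True
  | .app u _ => u.headIsVar
  | .lam _ u => IsHnf u

/-- One step of head reduction. -/
inductive HeadStep : Term → Term → Prop where
  | redex (x : Name) (u v : Term) :
      HeadStep (.app (.lam x u) v) (Term.subst x v u)
  | lamC (x : Name) {u u' : Term} : HeadStep u u' → HeadStep (.lam x u) (.lam x u')
  | appL {u u' : Term} (v : Term) :
      (∀ y w, u ≠ .lam y w) → HeadStep u u' → HeadStep (.app u v) (.app u' v)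

/-- Number of arguments applied to the head variable. -/
def Term.headArgCount : Term → Nat
  | .var _ => 0
  | .lam _ u => u.headArgCount
  | .app u _ => u.headArgCount + 1

/-! ## Simple types and eta-long forms -/

inductive Ty where
  | base : Ty
  | arrow : Ty → Ty → Ty
deriving DecidableEq

mutual
/-- `ELong Γ M A`: `M` is a simply-typed term in η-long form of type `A`. -/
inductive ELong : List (Name × Ty) → Term → Ty → Prop where
  | arrow {Γ x A B U} : ELong ((x, A) :: Γ) U B → ELong Γ (.lam x U) (.arrow A B)
  | base {Γ M} : ESpine Γ M .base → ELong Γ M .base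

/-- Spines: a head (variable or abstraction) applied to η-long arguments. -/
inductive ESpine : List (Name × Ty) → Term → Ty → Prop where
  | var {Γ x A} : Γ.lookup x = some A → ESpine Γ (.var x) A
  | head {Γ x U A B} : ELong Γ (.lam x U) (.arrow A B) → ESpine Γ (.lam x U) (.arrow A B)
  | app {Γ U V A B} : ESpine Γ U (.arrow A B) → ELong Γ V A → ESpine Γ (.app U V) B
end

/-! ## Computation trees -/

/-- Node kinds of the computation tree. -/
inductive NKind where
  | lam | var | app
deriving DecidableEq

/-- Node labels of the computation tree. -/
inductive NLabel where
  | lam : List Name → NLabel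
  | var : Name → NLabel
  | app : NLabel
deriving DecidableEq

/-- Computation trees: bulk λ-nodes (with one child), variable nodes (with
λ-node children) and @-nodes (operator + operand λ-node children). -/
inductive CT where
  | lam : List Name → CT → CT
  | var : Name → List CT → CT
  | app : CT → List CT → CT

instance : Inhabited CT := ⟨.var 0 []⟩

namespace CT

def kind : CT → NKind
  | .lam _ _ => .lam
  | .var _ _ => .var
  | .app _ _ => .app

def labelOf : CT → NLabel
  | .lam xs _ => .lam xs
  | .var z _ => .var z
  | .app _ _ => .app

/-- Arity of a node: number of bound variables / children / operands. -/
def arity : CT → Nat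
  | .lam xs _ => xs.length
  | .var _ cs => cs.length
  | .app _ cs => cs.length

/-- The subtree rooted at a given path.  A λ-node's unique child has index 1;
the operator of an @-node has index 0 and its operands indices 1,…; the
children of a variable node have indices 1,…. -/
def nodeAt : CT → Pos → Option CT
  | t, [] => some t
  | .lam _ c, 1 :: p => nodeAt c p
  | .var _ cs, (k + 1) :: p =>
      match cs[k]? with
      | some c => nodeAt c p
      | none => none
  | .app op _, 0 :: p => nodeAt op p
  | .app _ cs, (k + 1) :: p =>
      match cs[k]? with
      | some c => nodeAt c p
      | none => none
  | _, _ => none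

end CT

mutual
def namesCT : CT → List Name
  | .lam xs c => xs ++ namesCT c
  | .var z cs => z :: namesL cs
  | .app op cs => namesCT op ++ namesL cs
def namesL : List CT → List Name
  | [] => []
  | c :: cs => namesCT c ++ namesL cs
end

mutual
def freeNamesCT : CT → List Name
  | .lam xs c => (freeNamesCT c).filter (fun z => ! xs.contains z)
  | .var z cs => z :: freeNamesL cs
  | .app op cs => freeNamesCT op ++ freeNamesL cs
def freeNamesL : List CT → List Name
  | [] => []
  | c :: cs => freeNamesCT c ++ freeNamesL cs
end

/-- Canonical enumeration of the free variables of the tree. -/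
def freeListCT (T : CT) : List Name := (freeNamesCT T).dedup

/-! ### The computation tree of a term -/

mutual
/-- The body node (variable or @) of the computation tree of a term. -/
def ctreeB : Term → CT
  | .var z => .var z []
  | .lam x u =>
      .app (match ctreeL u with
            | .lam xs c => CT.lam (x :: xs) c
            | c => CT.lam [x] c) []
  | .app u v =>
      match ctreeB u with
      | .var z cts => .var z (cts ++ [ctreeL v])
      | .app op cts => .app op (cts ++ [ctreeL v])
      | c => c
termination_by t => 2 * t.size
decreasing_by all_goals (simp only [Term.size]; omega)
/-- The computation tree of a term (rooted at a bulk λ-node). -/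
def ctreeL : Term → CT
  | .lam x u =>
      match ctreeL u with
      | .lam xs c => .lam (x :: xs) c
      | c => .lam [x] c
  | .var z => .lam [] (.var z [])
  | .app u v => .lam [] (ctreeB (.app u v))
termination_by t => 2 * t.size + 1
decreasing_by all_goals (simp only [Term.size]; omega)
end

def ctree (M : Term) : CT := ctreeL M

/-! ### Binders in the computation tree -/

/-- `binderGo` walks a path maintaining the binding environment; returns the
(binder position, binding index) of the variable node at the end of the path. -/
def binderGo : CT → Pos → Pos → List (Name × (Pos × Nat)) → Option (Pos × Nat)
  | .var z _, [], _, env => env.lookup z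
  | .lam xs c, 1 :: p, cur, env =>
      binderGo c p (cur ++ [1])
        ((((xs.zipIdx.map Prod.swap).map (fun e => (e.2, (cur, e.1 + 1)))).reverse) ++ env)
  | .var _ cs, (k + 1) :: p, cur, env =>
      match cs[k]? with
      | some c => binderGo c p (cur ++ [k + 1]) env
      | none => none
  | .app op _, 0 :: p, cur, env => binderGo op p (cur ++ [0]) env
  | .app _ cs, (k + 1) :: p, cur, env =>
      match cs[k]? with
      | some c => binderGo c p (cur ++ [k + 1]) env
      | none => none
  | _, _, _, _ => none

/-- Binder (with binding index) of a variable node in the computation tree. -/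
def binderInCT (T : CT) (q : Pos) : Option (Pos × Nat) := binderGo T q [] []

/-! ### Generalized redexes at the level of computation trees -/

def seqPre (k : Nat) (l : List (Pos × Nat)) : List (Pos × Nat) :=
  l.map (fun s => (k :: s.1, s.2))

/-- The slots (binder position, binding index) of the head lambda-list. -/
def ctLamSlots : CT → List (Pos × Nat)
  | .lam xs c =>
      (List.range xs.length).map (fun j => (([] : Pos), j + 1))
        ++ seqPre 1 (ctLamSlots c)
  | .var _ _ => []
  | .app op cs => (seqPre 0 (ctLamSlots op)).drop cs.length

def preRedex (k : Nat) (l : List ((Pos × Nat) × (Pos × Nat))) :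
    List ((Pos × Nat) × (Pos × Nat)) :=
  l.map (fun r => ((k :: r.1.1, r.1.2), (k :: r.2.1, r.2.2)))

mutual
/-- Generalized redexes of a computation tree: pairs of a lambda slot
(binder position, binding index) and an argument (position of the @-node
where it is consumed, operand index). -/
def ctGr : CT → List ((Pos × Nat) × (Pos × Nat))
  | .lam _ c => preRedex 1 (ctGr c)
  | .var _ cs => ctGrL 1 cs
  | .app op cs =>
      ((((seqPre 0 (ctLamSlots op)).take cs.length).zipIdx.map Prod.swap).map
        (fun e => (e.2, (([] : Pos), e.1 + 1))))
      ++ preRedex 0 (ctGr op) ++ ctGrL 1 cs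
def ctGrL : Nat → List CT → List ((Pos × Nat) × (Pos × Nat))
  | _, [] => []
  | k, c :: cs => preRedex k (ctGr c) ++ ctGrL (k + 1) cs
end

/-- The variable node at `q` is involved in a generalized redex of `T`. -/
def involvedCT (T : CT) (q : Pos) : Bool :=
  match binderInCT T q with
  | some bi => (ctGr T).any (fun r => r.1 == bi)
  | none => false

/-- Length of the head lambda-list of (the term denoted by) a tree. -/
def ctLamLen : CT → Nat
  | .lam xs c => xs.length + ctLamLen c
  | .var _ _ => 0
  | .app op cs => ctLamLen op - cs.length

mutual
/-- The lloc of the subtree `t` of `T` located at absolute position `q`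
(involvement is computed with respect to the whole tree `T`). -/
def llocCT (T : CT) : CT → Pos → Option Pos
  | .lam _ c, q => llocCT T c (q ++ [1])
  | .var _ cs, q =>
      if involvedCT T q then some q else llocArgs T cs q 0 1
  | .app op cs, q =>
      match llocCT T op (q ++ [0]) with
      | some r => some r
      | none => llocArgs T cs q (ctLamLen op) 1
def llocArgs (T : CT) : List CT → Pos → Nat → Nat → Option Pos
  | [], _, _, _ => none
  | a :: rest, q, l, k =>
      if l = 0 then
        match llocCT T a (q ++ [k]) with
        | some r => some r
        | none => llocArgs T rest q 0 (k + 1)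
      else llocArgs T rest q (l - 1) (k + 1)
end

/-- The lloc of the subterm rooted at node `p` of the tree `T`. -/
def llocNode (T : CT) (p : Pos) : Option Pos :=
  match T.nodeAt p with
  | some sub => llocCT T sub p
  | none => none
/-! ## Extended nodes: structural nodes and ghost nodes -/

/-- Extended nodes: structural nodes (paths of the computation tree) and
ghost nodes, determined by their enabler and a label `k` exceeding its arity. -/
inductive ENode where
  | s : Pos → ENode
  | g : ENode → Nat → ENode
deriving DecidableEq

instance : Inhabited ENode := ⟨.s []⟩

def kindAt (T : CT) (p : Pos) : Option NKind := (T.nodeAt p).map CT.kind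

def arityAt (T : CT) (p : Pos) : Nat := ((T.nodeAt p).map CT.arity).getD 0

/-- Bound variables of the λ-node at `p`. -/
def boundAt (T : CT) (p : Pos) : List Name :=
  match T.nodeAt p with
  | some (.lam xs _) => xs
  | _ => []

namespace ENode

/-- Kind of an extended node (ghosts alternate kinds with their enabler). -/
def kindIn (T : CT) : ENode → Option NKind
  | .s p => kindAt T p
  | .g e _ =>
      match e.kindIn T with
      | some .lam => some .var
      | some _ => some .lam
      | none => none

/-- Arity of an extended node (ghost nodes have arity 0). -/
def arityIn (T : CT) : ENode → Nat
  | .s p => arityAt T p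
  | .g _ _ => 0

def isGhost : ENode → Bool
  | .s _ => false
  | .g _ _ => true

end ENode

/-- The unique enabler of a structural node: λ-nodes are enabled by their
parent (with the child index as label), variable nodes by their binder (with
the binding index) or by the root (with a label indexing the free variable
beyond the root's arity); @-nodes have no enabler. -/
def enablerF (T : CT) (p : Pos) : Option (Pos × Nat) :=
  match T.nodeAt p with
  | none => none
  | some (.app _ _) => none
  | some (.lam _ _) =>
      if h : p = [] then none else some (p.dropLast, p.getLast h)
  | some (.var z _) =>
      match binderInCT T p with
      | some b => some b
      | none => some (([] : Pos), arityAt T [] + 1 + (freeListCT T).idxOf z)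

/-- Structural enabling relation `bp ⊢_k q`. -/
def EnablesS (T : CT) (bp : Pos) (k : Nat) (q : Pos) : Prop :=
  (q = bp ++ [k] ∧ (T.nodeAt q).isSome = true ∧
    (kindAt T bp = some .var ∨ kindAt T bp = some .app))
  ∨ (kindAt T q = some .var ∧ binderInCT T q = some (bp, k))
  ∨ (binderInCT T q = none ∧ bp = [] ∧
      ∃ z cs, T.nodeAt q = some (.var z cs) ∧
        k = arityAt T [] + 1 + (freeListCT T).idxOf z)

def extPB (T : CT) : Nat → Pos → Bool
  | 0, _ => false
  | fuel + 1, p =>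
      if p = [] then true
      else
        match enablerF T p with
        | none => false
        | some (q, _) => extPB T fuel q

/-- External nodes: hereditarily enabled by the root. -/
def ENode.extIn (T : CT) : ENode → Bool
  | .s p => extPB T (p.length + 1) p
  | .g e _ => e.extIn T

/-! ## Justified sequences of nodes

A justified sequence is represented as a list of occurrences in **reverse
chronological order** (the head of the list is the last occurrence).  Each
occurrence carries a pointer given by a distance `dist` (`0` = no pointer)
and a label `jlab`, together with a list `pend` of *pending lambdas*. -/

structure Occ where
  node : ENode
  dist : Nat
  jlab : Nat
  pend : List Name
deriving DecidableEq

instance : Inhabited Occ := ⟨⟨.s [], 0, 0, []⟩⟩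

/-- The occurrence of the root of the tree. -/
def rootOcc : Occ := ⟨.s [], 0, 0, []⟩

/-- Indices (into the reversed sequence) of the occurrences retained by the
P-view. -/
def pviewIdx (T : CT) : List Occ → List Nat
  | [] => []
  | o :: s =>
      if o.node.kindIn T = some .lam then
        if o.dist = 0 then [0]
        else 0 :: o.dist :: ((pviewIdx T (s.drop o.dist)).map (fun i => i + o.dist + 1))
      else 0 :: (pviewIdx T s).map (fun i => i + 1)
termination_by s => s.length
decreasing_by
  all_goals simp [List.length_drop]
  all_goals omega

/-- Indices of the occurrences retained by the O-view. -/
def oviewIdx (T : CT) : List Occ → List Nat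
  | [] => []
  | o :: s =>
      if o.node.kindIn T = some .lam then 0 :: (oviewIdx T s).map (fun i => i + 1)
      else
        if o.dist = 0 then [0]
        else 0 :: o.dist :: ((oviewIdx T (s.drop o.dist)).map (fun i => i + o.dist + 1))
termination_by s => s.length
decreasing_by
  all_goals simp [List.length_drop]
  all_goals omega

/-- Extract the subsequence of `s` given by indices (with pending-lambda
data), recomputing justification pointers within the subsequence. -/
def extractK (s : List Occ) (ks : List (Nat × List Name)) (setPend : Bool) :
    List Occ :=
  let idxs := ks.map Prod.fst
  (ks.zipIdx.map Prod.swap).map (fun e =>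
    let a := e.1
    let i := e.2.1
    let o := (s[i]?).getD default
    let d :=
      if o.dist = 0 then 0
      else
        let b := idxs.idxOf (i + o.dist)
        if b < idxs.length ∧ a < b then b - a else 0
    { o with dist := d, pend := if setPend then e.2.2 else o.pend })

/-- The P-view of a justified sequence. -/
def pview (T : CT) (s : List Occ) : List Occ :=
  extractK s ((pviewIdx T s).map (fun i => (i, ([] : List Name)))) false

/-- The O-view of a justified sequence. -/
def oview (T : CT) (s : List Occ) : List Occ :=
  extractK s ((oviewIdx T s).map (fun i => (i, ([] : List Name)))) false

/-- Follow justification pointers from index `i`; returns the index of the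
final pointer-less occurrence. -/
def chainEnd (s : List Occ) : Nat → Nat → Option Nat
  | 0, _ => none
  | fuel + 1, i =>
      match s[i]? with
      | none => none
      | some o => if o.dist = 0 then some i else chainEnd s fuel (i + o.dist)

def herEnd (s : List Occ) (i : Nat) : Option Nat := chainEnd s s.length i

/-- The occurrence at index `i` is hereditarily justified by the root. -/
def HerRoot (s : List Occ) (i : Nat) : Prop :=
  ∃ j o, herEnd s i = some j ∧ s[j]? = some o ∧ o.node = ENode.s []

/-- The occurrence at index `i` is hereditarily justified by an @-node. -/
def HerApp (T : CT) (s : List Occ) (i : Nat) : Prop :=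
  ∃ j o, herEnd s i = some j ∧ s[j]? = some o ∧ o.node.kindIn T = some .app

/-! ## Arity threshold -/

/-- Auxiliary computation of the arity threshold along the last strand. -/
def athZ (T : CT) : List Occ → Int → Int
  | nq :: aq :: rest, acc =>
      if aq.node.extIn T then 0
      else
        max ((nq.node.arityIn T : Int) + acc)
            (athZ T rest (acc + (nq.node.arityIn T : Int) - (aq.node.arityIn T : Int)))
  | _, _ => 0

/-- The arity threshold of a traversal ending with an external variable. -/
def ath (T : CT) (s : List Occ) : Nat := (athZ T s 0).toNat

/-! ## Imaginary traversals (Table 1) and their restrictions -/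

/-- Configuration selecting the variants of the traversal rules. -/
structure TravCfg where
  branch : Bool   -- rule IVar restricted to justifier = last occurrence
  bound : Bool    -- rule IVar label bounded by the arity threshold
  etaVar : Bool   -- eta-expanded subcase of rule Var allowed
  etaIVar : Bool  -- eta-expanded subcase of rule IVar allowed
  ghostLam : Bool -- rule Lam^ghost allowed

/-- The traversal rules (Table 1 of the paper, and its restrictions). -/
inductive TravR (T : CT) (cfg : TravCfg) : List Occ → Prop where
  | root : TravR T cfg [rootOcc]
  | app {s : List Occ} {o : Occ} {p : Pos} :
      TravR T cfg (o :: s) →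
      o.node = .s p → kindAt T p = some .app →
      TravR T cfg (⟨.s (p ++ [0]), 1, 0, []⟩ :: o :: s)
  | lamApp {s : List Occ} {o : Occ} {p : Pos} :
      TravR T cfg (o :: s) →
      o.node = .s p → kindAt T p = some .lam →
      kindAt T (p ++ [1]) = some .app →
      TravR T cfg (⟨.s (p ++ [1]), 0, 0, []⟩ :: o :: s)
  | lamVar {s : List Occ} {o j : Occ} {p bp : Pos} {d k : Nat} :
      TravR T cfg (o :: s) →
      o.node = .s p → kindAt T p = some .lam →
      kindAt T (p ++ [1]) = some .var →
      1 ≤ d → (o :: s)[d - 1]? = some j → j.node = .s bp →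
      EnablesS T bp k (p ++ [1]) →
      (d - 1) ∈ pviewIdx T (o :: s) →
      TravR T cfg (⟨.s (p ++ [1]), d, k, []⟩ :: o :: s)
  | lamGhost {s : List Occ} {gl n a : Occ} :
      cfg.ghostLam = true →
      TravR T cfg (gl :: s) →
      gl.node.isGhost = true → gl.node.kindIn T = some .lam →
      1 ≤ gl.dist → s[gl.dist - 1]? = some n → s[gl.dist]? = some a →
      n.node.kindIn T = some .var → a.node.kindIn T = some .lam →
      TravR T cfg
        (⟨.g a.node (a.node.arityIn T + gl.jlab - n.node.arityIn T),
          gl.dist + 2, a.node.arityIn T + gl.jlab - n.node.arityIn T, []⟩ :: gl :: s)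
  | varC {s : List Occ} {n a m : Occ} {q : Pos} :
      TravR T cfg (n :: s) →
      n.node.kindIn T = some .var →
      HerApp T (n :: s) 0 →
      1 ≤ n.dist → 1 ≤ n.jlab →
      s[n.dist - 1]? = some a → a.node.kindIn T = some .lam →
      s[n.dist]? = some m →
      (m.node.kindIn T = some .var ∨ m.node.kindIn T = some .app) →
      m.node = .s q → n.jlab ≤ arityAt T q →
      TravR T cfg (⟨.s (q ++ [n.jlab]), n.dist + 2, n.jlab, []⟩ :: n :: s)
  | varE {s : List Occ} {n a m : Occ} :
      cfg.etaVar = true →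
      TravR T cfg (n :: s) →
      n.node.kindIn T = some .var →
      HerApp T (n :: s) 0 →
      1 ≤ n.dist → 1 ≤ n.jlab →
      s[n.dist - 1]? = some a → a.node.kindIn T = some .lam →
      s[n.dist]? = some m →
      (m.node.kindIn T = some .var ∨ m.node.kindIn T = some .app) →
      m.node.arityIn T < n.jlab →
      TravR T cfg (⟨.g m.node n.jlab, n.dist + 2, n.jlab, []⟩ :: n :: s)
  | ivarC {s : List Occ} {n m : Occ} {q : Pos} {jm i : Nat} :
      TravR T cfg (n :: s) →
      n.node.kindIn T = some .var →
      (cfg.branch = true → n.node.extIn T = true) →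
      (cfg.branch = false → HerRoot (n :: s) 0) →
      1 ≤ i →
      (n :: s)[jm]? = some m → m.node.kindIn T = some .var →
      jm ∈ oviewIdx T (n :: s) →
      (cfg.branch = true → jm = 0) →
      (cfg.bound = true → i ≤ ath T (n :: s)) →
      m.node = .s q → i ≤ arityAt T q →
      TravR T cfg (⟨.s (q ++ [i]), jm + 1, i, []⟩ :: n :: s)
  | ivarE {s : List Occ} {n m : Occ} {jm i : Nat} :
      cfg.etaIVar = true →
      TravR T cfg (n :: s) →
      n.node.kindIn T = some .var →
      (cfg.branch = true → n.node.extIn T = true) →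
      (cfg.branch = false → HerRoot (n :: s) 0) →
      1 ≤ i →
      (n :: s)[jm]? = some m → m.node.kindIn T = some .var →
      jm ∈ oviewIdx T (n :: s) →
      (cfg.branch = true → jm = 0) →
      (cfg.bound = true → i ≤ ath T (n :: s)) →
      m.node.arityIn T < i →
      TravR T cfg (⟨.g m.node i, jm + 1, i, []⟩ :: n :: s)

/-- Imaginary traversals of the untyped λ-calculus (Table 1). -/
def Trav (T : CT) : List Occ → Prop :=
  TravR T ⟨false, false, true, true, true⟩

/-- Branching traversals: rule IVar points to the last occurrence. -/
def TravB (T : CT) : List Occ → Prop :=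
  TravR T ⟨true, false, true, true, true⟩

/-- Normalizing traversals (Table 2): branching + arity-threshold bound. -/
def TravN (T : CT) : List Occ → Prop :=
  TravR T ⟨true, true, true, true, true⟩

/-- STLC traversals: no ghost rules at all. -/
def TravSTLC (T : CT) : List Occ → Prop :=
  TravR T ⟨false, false, false, false, false⟩

/-- Traversals without the eta-expanded subcase of rule IVar. -/
def TravNoEtaIVar (T : CT) : List Occ → Prop :=
  TravR T ⟨false, false, true, false, true⟩

/-- Chronological prefix of length `n` of an infinite sequence of
occurrences, in reverse representation. -/
def prefixRev (f : Nat → Occ) (n : Nat) : List Occ :=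
  ((List.range n).map f).reverse
/-! ## Justified paths of the computation tree -/

/-- Justified paths: paths of the computation tree from the root, equipped
with the induced justification pointers (bound variables point to their
binder with the binding index, free variables to the root, λ-nodes to their
parent with the child index). -/
inductive JPath (T : CT) : List Occ → Prop where
  | root : JPath T [rootOcc]
  | lam {s : List Occ} {o : Occ} {p : Pos} {k : Nat} :
      JPath T (o :: s) → o.node = .s p →
      (kindAt T p = some .var ∨ kindAt T p = some .app) →
      (T.nodeAt (p ++ [k])).isSome = true → kindAt T (p ++ [k]) = some .lam →
      JPath T (⟨.s (p ++ [k]), 1, k, []⟩ :: o :: s)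
  | appNode {s : List Occ} {o : Occ} {p : Pos} :
      JPath T (o :: s) → o.node = .s p → kindAt T p = some .lam →
      kindAt T (p ++ [1]) = some .app →
      JPath T (⟨.s (p ++ [1]), 0, 0, []⟩ :: o :: s)
  | varNode {s : List Occ} {o j : Occ} {p bp : Pos} {d k : Nat} :
      JPath T (o :: s) → o.node = .s p → kindAt T p = some .lam →
      kindAt T (p ++ [1]) = some .var →
      1 ≤ d → (o :: s)[d - 1]? = some j → j.node = .s bp →
      EnablesS T bp k (p ++ [1]) →
      JPath T (⟨.s (p ++ [1]), d, k, []⟩ :: o :: s)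

/-- Maximal justified paths. -/
def MaxJPath (T : CT) (s : List Occ) : Prop :=
  JPath T s ∧ ∀ o, ¬ JPath T (o :: s)

/-- Label of an occurrence (structural nodes only). -/
def labOf (T : CT) (o : Occ) : Option NLabel :=
  match o.node with
  | .s p => (T.nodeAt p).map CT.labelOf
  | .g _ _ => none

/-! ## Structures of justified sequences -/

/-- The structure of an occurrence: node kind, pointer distance, pointer
label (node labels are forgotten). -/
structure OccStr where
  kind : Option NKind
  dist : Nat
  jlab : Nat
deriving DecidableEq

/-- The structure of a justified sequence. -/
def strOf (T : CT) (s : List Occ) : List OccStr :=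
  s.map (fun o => ⟨o.node.kindIn T, o.dist, o.jlab⟩)

/-! ## Core projection -/

/-- Indices (with pending-lambda relabelling data) retained by the core
projection, computed with a stack `ys` of pending lambdas. -/
def coreIdx (T : CT) : List Occ → List Name → List (Nat × List Name)
  | [], _ => []
  | o :: s, ys =>
      match o.node.kindIn T with
      | some .var =>
          if o.node.extIn T then
            (0, o.pend) :: (coreIdx T s []).map (fun e => (e.1 + 1, e.2))
          else (coreIdx T s (ys.drop (o.node.arityIn T))).map (fun e => (e.1 + 1, e.2))
      | some .app =>
          (coreIdx T s (ys.drop (o.node.arityIn T))).map (fun e => (e.1 + 1, e.2))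
      | some .lam =>
          if o.node.extIn T then
            (0, o.pend ++ ys) :: (coreIdx T s []).map (fun e => (e.1 + 1, e.2))
          else
            match o.node with
            | .s p =>
                (coreIdx T s (boundAt T p ++ o.pend ++ ys)).map (fun e => (e.1 + 1, e.2))
            | .g _ _ => (coreIdx T s (o.pend ++ ys)).map (fun e => (e.1 + 1, e.2))
      | none => (coreIdx T s ys).map (fun e => (e.1 + 1, e.2))

/-- The core of a justified sequence: the subsequence of external occurrences,
with pending lambdas prepended to the labels of external λ-nodes. -/
def core (T : CT) (s : List Occ) : List Occ :=
  extractK s (coreIdx T s []) true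

/-! ## On-the-fly eta-expansion -/

def modArg : List CT → Nat → (CT → CT) → List CT
  | [], _, _ => []
  | c :: cs, 0, f => f c :: cs
  | c :: cs, k + 1, f => c :: modArg cs k f

def CT.modifyAt : CT → Pos → (CT → CT) → CT
  | t, [], f => f t
  | .lam xs c, 1 :: p, f => .lam xs (c.modifyAt p f)
  | .var z cs, (k + 1) :: p, f => .var z (modArg cs k (fun c => c.modifyAt p f))
  | .app op cs, 0 :: p, f => .app (op.modifyAt p f) cs
  | .app op cs, (k + 1) :: p, f => .app op (modArg cs k (fun c => c.modifyAt p f))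
  | t, _, _ => t
termination_by t p _ => p.length
decreasing_by all_goals simp

def freshCT (T : CT) : Name := (namesCT T).foldr max 0 + 1

/-- One eta-expansion step at the variable/@-node `q`: the subterm `N`
rooted at `q` is replaced by `λθ. N θ` for a fresh `θ` (in the computation
tree, `θ` is appended to the bound variables of the parent λ-node and a new
operand `λ⟨θ⟩` is appended to the children of `q`). -/
def etaStep (T : CT) (q : Pos) : CT :=
  let θ := freshCT T
  let T1 := T.modifyAt q (fun n =>
    match n with
    | .var z cs => .var z (cs ++ [.lam [] (.var θ [])])
    | .app op cs => .app op (cs ++ [.lam [] (.var θ [])])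
    | t => t)
  T1.modifyAt q.dropLast (fun n =>
    match n with
    | .lam xs c => .lam (xs ++ [θ]) c
    | t => t)

/-- Process the occurrences of a traversal chronologically, performing an
eta-expansion at the justifier of each ghost λ-node occurrence (the
eta-expanded subcases of rules Var and IVar); `acc` records the materialized
position of each processed occurrence. -/
def etaFoldGo : CT → List Pos → List Occ → CT
  | T, _, [] => T
  | T, acc, o :: os =>
      match o.node with
      | .s p => etaFoldGo T (p :: acc) os
      | .g _ i =>
          if o.node.kindIn T = some .lam then
            let q := acc.getD (o.dist - 1) []
            etaFoldGo (etaStep T q) ((q ++ [i]) :: acc) os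
          else
            let q := acc.getD 0 []
            etaFoldGo T ((q ++ [1]) :: acc) os

/-- The on-the-fly eta-expansion `M^t` of (the computation tree of) a term
with respect to a finite traversal `t`. -/
def etaExpCT (T : CT) (t : List Occ) : CT := etaFoldGo T [] t.reverse

/-- Element-wise, pointer-preserving extension of a map on extended nodes to
justified sequences. -/
def mapOcc (η : ENode → ENode) (s : List Occ) : List Occ :=
  s.map (fun o => { o with node := η o.node })

/-! ## Isomorphisms of sets of justified sequences -/

/-- Structure-preserving bijection between two sets of justified sequences
(over trees `T₁` and `T₂` respectively). -/
def StrIso (T₁ T₂ : CT) (S₁ S₂ : Set (List Occ)) : Prop :=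
  ∃ φ : List Occ → List Occ, Set.BijOn φ S₁ S₂ ∧
    ∀ s ∈ S₁, strOf T₂ (φ s) = strOf T₁ s

/-- The set of cores of normalizing traversals of a term. -/
def CoreSet (M : Term) : Set (List Occ) :=
  {c | ∃ t, TravN (ctree M) t ∧ c = core (ctree M) t}

/-- The set of structures of core P-views of normalizing traversals
(the quotient `Trav^n(M)/∼`, each class identified with the common structure
of the core P-views of its members). -/
def QuotSet (M : Term) : Set (List OccStr) :=
  {x | ∃ t, TravN (ctree M) t ∧
        x = strOf (ctree M) (pview (ctree M) (core (ctree M) t))}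
/-! ## Strands (for the weaving proposition) -/

/-- `n_q` of the last strand: the (var/@)-occurrence at index `2(q-1)` of the
reversed sequence (`q` counted from 1, so `n_1` is the last occurrence). -/
def nOcc (t : List Occ) (q : Nat) : Occ := (t[2 * (q - 1)]?).getD default

/-- `α_q` of the last strand: the λ-occurrence at index `2q - 1`. -/
def aOcc (t : List Occ) (q : Nat) : Occ := (t[2 * q - 1]?).getD default

def nAr (T : CT) (t : List Occ) (q : Nat) : Int := ((nOcc t q).node.arityIn T : Int)
def aAr (T : CT) (t : List Occ) (q : Nat) : Int := ((aOcc t q).node.arityIn T : Int)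

/-- `i_q = i - ∑_{j=1}^{q-1} (|n_j| - |α_j|)`. -/
def iSeq (T : CT) (t : List Occ) (i : Nat) (q : Nat) : Int :=
  (i : Int) - ∑ j ∈ Finset.Ico 1 q, (nAr T t j - aAr T t j)

/-- The last strand of `t` has length `2k`: it starts with an external
λ-node `α_k`, ends with the last occurrence `n_1`, an external variable,
and all the `2k - 2` occurrences in between are internal, alternating
between λ-nodes and variable/@-nodes. -/
def LastStrand (T : CT) (t : List Occ) (k : Nat) : Prop :=
  1 ≤ k ∧ 2 * k ≤ t.length ∧
  (∀ q, 1 ≤ q → q ≤ k →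
    ((nOcc t q).node.kindIn T = some .var ∨ (nOcc t q).node.kindIn T = some .app)) ∧
  (∀ q, 1 ≤ q → q ≤ k → (aOcc t q).node.kindIn T = some .lam) ∧
  (nOcc t 1).node.kindIn T = some .var ∧ (nOcc t 1).node.extIn T = true ∧
  (aOcc t k).node.extIn T = true ∧
  (∀ j, 1 ≤ j → j ≤ 2 * k - 2 → ∀ o, t[j]? = some o → o.node.extIn T = false)

/-! ## Spinal paths (for the generalized redex argument lookup) -/

/-- Position of `@_j` on the spinal descent below the @-node at `a`
(`@_r = a` is the topmost one, `@_1` the lowest). -/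
def atPos (a : Pos) (r j : Nat) : Pos :=
  a ++ (List.replicate (r - j) ([0, 1] : Pos)).flatten

/-- The sequence `i_1 = i`, `i_{j+1} = i_j - |@_j| + |λx̄_{j+1}|` along the
spinal descent. -/
def iSeqL (T : CT) (a : Pos) (r i : Nat) : Nat → Int
  | 0 => (i : Int)
  | 1 => (i : Int)
  | j + 1 =>
      iSeqL T a r i j - (arityAt T (atPos a r j) : Int)
        + (arityAt T (atPos a r (j + 1) ++ [0]) : Int)
end ULC

theorem List.Forall₂.lookup_eq_some {α β γ : Type*} [BEq α] [LawfulBEq α]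
    {S : β → γ → Prop} {l₁ : List (α × β)} {l₂ : List (α × γ)}
    (h : List.Forall₂ (fun b e => b.1 = e.1 ∧ S b.2 e.2) l₁ l₂) {a : α} {b : β}
    (hb : l₁.lookup a = some b) : ∃ c, l₂.lookup a = some c ∧ S b c := by
  induction h with
  | nil => simp at hb
  | @cons be ce l₁ l₂ hR _ ih =>
    obtain ⟨x, v⟩ := be
    obtain ⟨y, w⟩ := ce
    obtain ⟨rfl, hS⟩ := hR
    by_cases hax : a = x
    · subst hax
      obtain rfl : v = b := by simpa using hb
      exact ⟨w, by simp, hS⟩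
    · have hne : (a == x) = false := by simpa using hax
      simpa [List.lookup_cons, hne] using ih (by simpa [List.lookup_cons, hne] using hb)

namespace ULC

/-! ### η-long typings of computation trees -/

def Ty.args : Ty → List Ty
  | .base => []
  | .arrow A B => A :: B.args

abbrev Env := List (Name × Ty)

/- A spine node is typed by the type of its head (variable or operator λ-node), and it is
applied to exactly one operand per argument of that type. Derivations are data, so that the
types along a path of the tree can be computed (`typedAt`). -/
mutual
inductive LamDeriv : Env → CT → Ty → Type where
  | mk {Δ : Env} {xs : List Name} {c : CT} {A B : Ty} :
      xs.length = A.args.length →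
      SpineDeriv ((xs.zip A.args).reverse ++ Δ) c B → LamDeriv Δ (.lam xs c) A
inductive SpineDeriv : Env → CT → Ty → Type where
  | var {Δ : Env} {z : Name} {cs : List CT} {A : Ty} :
      Δ.lookup z = some A → ArgsDeriv Δ cs A.args → SpineDeriv Δ (.var z cs) A
  | app {Δ : Env} {xs : List Name} {c : CT} {cs : List CT} {A : Ty} :
      LamDeriv Δ (.lam xs c) A → ArgsDeriv Δ cs A.args → SpineDeriv Δ (.app (.lam xs c) cs) A
inductive ArgsDeriv : Env → List CT → List Ty → Type where
  | nil {Δ : Env} : ArgsDeriv Δ [] []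
  | cons {Δ : Env} {c : CT} {A : Ty} {cs : List CT} {As : List Ty} :
      LamDeriv Δ c A → ArgsDeriv Δ cs As → ArgsDeriv Δ (c :: cs) (A :: As)
end

namespace ArgsDeriv

def get : {Δ : Env} → {cs : List CT} → {As : List Ty} →
    ArgsDeriv Δ cs As → Nat → Option ((c : CT) ×' (A : Ty) ×' LamDeriv Δ c A)
  | _, _, _, .nil, _ => none
  | _, _, _, .cons d _, 0 => some ⟨_, _, d⟩
  | _, _, _, .cons _ ds, k + 1 => ds.get k

theorem length_eq : ∀ {Δ cs As}, ArgsDeriv Δ cs As → cs.length = As.length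
  | _, _, _, .nil => rfl
  | _, _, _, .cons _ ds => by simp [ds.length_eq]

theorem get_eq_some : ∀ {Δ cs As} (ds : ArgsDeriv Δ cs As) (k : Nat) x,
    ds.get k = some x → cs[k]? = some x.1 ∧ As[k]? = some x.2.1
  | _, _, _, .nil, _, _, h => by simp [get] at h
  | _, _, _, .cons _ _, 0, _, h => by cases h; simp
  | _, _, _, .cons _ ds, k + 1, x, h => by simpa using ds.get_eq_some k x h

theorem exists_get_eq_some : ∀ {Δ cs As} (ds : ArgsDeriv Δ cs As) (k : Nat),
    k < cs.length → ∃ x, ds.get k = some x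
  | _, _, _, .nil, _, h => by simp at h
  | _, _, _, .cons _ _, 0, _ => ⟨_, rfl⟩
  | _, _, _, .cons _ ds, k + 1, h => by
      simpa [get] using ds.exists_get_eq_some k (by simpa using h)

def snoc : {Δ : Env} → {cs : List CT} → {As : List Ty} → {c : CT} → {A : Ty} →
    ArgsDeriv Δ cs As → LamDeriv Δ c A → ArgsDeriv Δ (cs ++ [c]) (As ++ [A])
  | _, _, _, _, _, .nil, d => .cons d .nil
  | _, _, _, _, _, .cons e es, d => .cons e (es.snoc d)

end ArgsDeriv

theorem LamDeriv.eq_lam {Δ : Env} {t : CT} {A : Ty} (d : LamDeriv Δ t A) :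
    ∃ xs c, t = .lam xs c := by
  cases d; exact ⟨_, _, rfl⟩

theorem SpineDeriv.arity_eq {Δ : Env} {t : CT} {A : Ty} (d : SpineDeriv Δ t A) :
    t.arity = A.args.length := by
  cases d with
  | var _ ds => exact ds.length_eq
  | app _ ds => exact ds.length_eq

inductive TypedNode : Type where
  | lam (Δ : Env) (t : CT) (A : Ty) : LamDeriv Δ t A → TypedNode
  | spine (Δ : Env) (t : CT) (A : Ty) : SpineDeriv Δ t A → TypedNode

namespace TypedNode

def tree : TypedNode → CT
  | .lam _ t _ _ => t
  | .spine _ t _ _ => t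

def env : TypedNode → Env
  | .lam Δ _ _ _ => Δ
  | .spine Δ _ _ _ => Δ

def child : TypedNode → Nat → Option TypedNode
  | .lam Δ _ A (.mk (xs := xs) (c := c) _ d), 1 =>
      some (.spine ((xs.zip A.args).reverse ++ Δ) c _ d)
  | .spine Δ _ A (.app d _), 0 => some (.lam Δ _ A d)
  | .spine Δ _ _ (.var _ ds), k + 1 => (ds.get k).map fun x => .lam Δ x.1 x.2.1 x.2.2
  | .spine Δ _ _ (.app _ ds), k + 1 => (ds.get k).map fun x => .lam Δ x.1 x.2.1 x.2.2
  | _, _ => none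

theorem nodeAt_child {i i' : TypedNode} {k : Nat} (h : i.child k = some i') :
    i.tree.nodeAt [k] = some i'.tree := by
  match i, k, h with
  | .lam _ _ _ (.mk _ _), 1, h => cases h; rfl
  | .spine _ _ _ (.app _ _), 0, h => cases h; rfl
  | .spine _ _ _ (.var _ ds), k + 1, h =>
      obtain ⟨x, hx, rfl⟩ := Option.map_eq_some_iff.mp h
      simp [tree, CT.nodeAt, (ds.get_eq_some k x hx).1]
  | .spine _ _ _ (.app _ ds), k + 1, h =>
      obtain ⟨x, hx, rfl⟩ := Option.map_eq_some_iff.mp h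
      simp [tree, CT.nodeAt, (ds.get_eq_some k x hx).1]

theorem eq_lam_of_kind {i : TypedNode} (h : i.tree.kind = .lam) :
    ∃ Δ t A d, i = .lam Δ t A d := by
  rcases i with ⟨Δ, t, A, d⟩ | ⟨Δ, t, A, d⟩
  · exact ⟨Δ, t, A, d, rfl⟩
  · cases d <;> cases h

theorem eq_var_of_kind {i : TypedNode} (h : i.tree.kind = .var) :
    ∃ Δ z cs A d, i = .spine Δ (.var z cs) A d := by
  rcases i with ⟨Δ, t, A, d⟩ | ⟨Δ, t, A, d⟩
  · obtain ⟨xs, c, rfl⟩ := d.eq_lam; cases h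
  · cases d with
    | var => exact ⟨_, _, _, _, _, rfl⟩
    | app => cases h

theorem eq_app_of_kind {i : TypedNode} (h : i.tree.kind = .app) :
    ∃ Δ op cs A d, i = .spine Δ (.app op cs) A d := by
  rcases i with ⟨Δ, t, A, d⟩ | ⟨Δ, t, A, d⟩
  · obtain ⟨xs, c, rfl⟩ := d.eq_lam; cases h
  · cases d with
    | var => cases h
    | app => exact ⟨_, _, _, _, _, rfl⟩

end TypedNode

theorem CT.nodeAt_append : ∀ (t : CT) (p q : Pos),
    t.nodeAt (p ++ q) = (t.nodeAt p).bind (·.nodeAt q)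
  | t, [], q => by simp [CT.nodeAt]
  | .lam _ c, 1 :: p, q => by simpa [CT.nodeAt] using nodeAt_append c p q
  | .app op _, 0 :: p, q => by simpa [CT.nodeAt] using nodeAt_append op p q
  | .var _ cs, (k + 1) :: p, q | .app _ cs, (k + 1) :: p, q => by
      cases h : cs[k]? with
      | none => simp [CT.nodeAt, h]
      | some c => simpa [CT.nodeAt, h] using nodeAt_append c p q
  | .lam _ _, 0 :: _, _ | .lam _ _, (_ + 2) :: _, _ | .var _ _, 0 :: _, _ => by
      simp [CT.nodeAt]

section Navigation

variable {Γ₀ : Env} {T : CT} {A₀ : Ty} (D : LamDeriv Γ₀ T A₀)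

def typedAt (p : Pos) : Option TypedNode :=
  p.foldl (fun oi k => oi.bind (·.child k)) (some (.lam Γ₀ T A₀ D))

theorem typedAt_nil : typedAt D [] = some (.lam Γ₀ T A₀ D) := rfl

theorem typedAt_append_singleton (p : Pos) (k : Nat) :
    typedAt D (p ++ [k]) = (typedAt D p).bind (·.child k) := by
  simp [typedAt, List.foldl_append]

theorem kindAt_root (D : LamDeriv Γ₀ T A₀) : kindAt T [] = some .lam := by
  obtain ⟨xs, c, rfl⟩ := D.eq_lam
  rfl

variable {D}

theorem nodeAt_of_typedAt {p : Pos} {i : TypedNode} (h : typedAt D p = some i) :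
    T.nodeAt p = some i.tree := by
  induction p using List.reverseRecOn generalizing i with
  | nil => cases h; rfl
  | append_singleton p k ih =>
    rw [typedAt_append_singleton] at h
    obtain ⟨i₀, h₀, hstep⟩ := Option.bind_eq_some_iff.mp h
    rw [CT.nodeAt_append, ih h₀]
    exact TypedNode.nodeAt_child hstep

theorem kindAt_of_typedAt {p : Pos} {i : TypedNode} (h : typedAt D p = some i) :
    kindAt T p = some i.tree.kind := by
  simp [kindAt, nodeAt_of_typedAt h]

theorem arityAt_of_typedAt {p : Pos} {i : TypedNode} (h : typedAt D p = some i) :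
    arityAt T p = i.tree.arity := by
  simp [arityAt, nodeAt_of_typedAt h]

theorem typedAt_body {p : Pos} {Δ : Env} {t : CT} {A : Ty} {d : LamDeriv Δ t A}
    (h : typedAt D p = some (.lam Δ t A d)) :
    ∃ xs c B d', t = .lam xs c ∧
      typedAt D (p ++ [1]) = some (.spine ((xs.zip A.args).reverse ++ Δ) c B d') := by
  cases d with
  | mk _ d' => exact ⟨_, _, _, d', rfl, by rw [typedAt_append_singleton, h]; rfl⟩

theorem typedAt_operator {p : Pos} {Δ : Env} {op : CT} {cs : List CT} {A : Ty}
    {d : SpineDeriv Δ (.app op cs) A} (h : typedAt D p = some (.spine Δ (.app op cs) A d)) :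
    ∃ d', typedAt D (p ++ [0]) = some (.lam Δ op A d') := by
  cases d with
  | app d' _ => exact ⟨d', by rw [typedAt_append_singleton, h]; rfl⟩

theorem typedAt_operand {p : Pos} {Δ : Env} {t : CT} {A : Ty} {d : SpineDeriv Δ t A}
    (h : typedAt D p = some (.spine Δ t A d)) {k : Nat} (hk : 1 ≤ k)
    (hle : k ≤ A.args.length) :
    ∃ c B d', A.args[k - 1]? = some B ∧ typedAt D (p ++ [k]) = some (.lam Δ c B d') := by
  obtain ⟨k, rfl⟩ : ∃ k', k = k' + 1 := ⟨k - 1, by omega⟩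
  cases d with
  | var _ ds | app _ ds =>
    obtain ⟨x, hx⟩ := ds.exists_get_eq_some k (by have := ds.length_eq; omega)
    refine ⟨x.1, x.2.1, x.2.2, by simpa using (ds.get_eq_some k x hx).2, ?_⟩
    rw [typedAt_append_singleton, h]
    simp [TypedNode.child, hx]

end Navigation

/-! ### Typing the computation tree of an η-long term -/

theorem Ty.args_eq_nil {A : Ty} (h : A.args = []) : A = .base := by
  cases A with
  | base => rfl
  | arrow => simp [Ty.args] at h

theorem ctreeL_eq_lam (M : Term) : ∃ xs c, ctreeL M = .lam xs c := by
  cases M with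
  | var z => exact ⟨[], _, by rw [ctreeL]⟩
  | app u v => exact ⟨[], _, by rw [ctreeL]⟩
  | lam x u =>
    cases h : ctreeL u with
    | lam xs c => exact ⟨x :: xs, c, by rw [ctreeL, h]⟩
    | var z cs => exact ⟨[x], _, by rw [ctreeL, h]⟩
    | app op cs => exact ⟨[x], _, by rw [ctreeL, h]⟩

theorem ctreeB_lam (x : Name) (u : Term) : ctreeB (.lam x u) = .app (ctreeL (.lam x u)) [] := by
  rw [ctreeB, ctreeL]

theorem ctreeL_eq_lam_nil {M : Term} (hM : ∀ x u, M ≠ .lam x u) :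
    ctreeL M = .lam [] (ctreeB M) := by
  cases M with
  | var => rw [ctreeL, ctreeB]
  | app => rw [ctreeL]
  | lam x u => exact absurd rfl (hM x u)

theorem LamDeriv.abs {x : Name} {U : Term} {A B : Ty} {Γ : Env}
    (d : LamDeriv ((x, A) :: Γ) (ctreeL U) B) :
    Nonempty (LamDeriv Γ (ctreeL (.lam x U)) (.arrow A B)) := by
  obtain ⟨xs, c, hU⟩ := ctreeL_eq_lam U
  rw [hU] at d
  cases d with
  | @mk _ _ _ _ B' hlen ws =>
    rw [ctreeL, hU]
    exact ⟨.mk (B := B') (by simp [Ty.args, hlen]) (by simpa [Ty.args] using ws)⟩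

def PartialSpine (Γ : Env) (M : Term) (A : Ty) : Prop :=
  ∃ A₀ pre cs, A₀.args = pre ++ A.args ∧ Nonempty (ArgsDeriv Γ cs pre) ∧
    ((∃ z, ctreeB M = .var z cs ∧ Γ.lookup z = some A₀) ∨
     (∃ xs c, ctreeB M = .app (.lam xs c) cs ∧ Nonempty (LamDeriv Γ (.lam xs c) A₀)))

theorem PartialSpine.app {Γ : Env} {U V : Term} {A B : Ty} (hU : PartialSpine Γ U (.arrow A B))
    (dV : LamDeriv Γ (ctreeL V) A) : PartialSpine Γ (.app U V) B := by
  obtain ⟨A₀, pre, cs, hargs, ⟨ds⟩, hhead⟩ := hU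
  refine ⟨A₀, pre ++ [A], cs ++ [ctreeL V], by simp [hargs, Ty.args], ⟨ds.snoc dV⟩, ?_⟩
  rcases hhead with ⟨z, hB, hz⟩ | ⟨xs, c, hB, dop⟩
  · exact .inl ⟨z, by rw [ctreeB, hB], hz⟩
  · exact .inr ⟨xs, c, by rw [ctreeB, hB], dop⟩

theorem PartialSpine.lamDeriv {Γ : Env} {M : Term} (h : PartialSpine Γ M .base) :
    Nonempty (LamDeriv Γ (ctreeL M) .base) := by
  obtain ⟨A₀, pre, cs, hargs, ⟨ds⟩, hhead⟩ := h
  simp only [Ty.args, List.append_nil] at hargs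
  subst hargs
  cases M with
  | lam x u =>
    rcases hhead with ⟨z, hB, -⟩ | ⟨xs, c, hB, ⟨dop⟩⟩ <;> rw [ctreeB_lam] at hB
    · cases hB
    · obtain ⟨hop, rfl⟩ := CT.app.inj hB
      have hA₀ : A₀ = .base := Ty.args_eq_nil (by simpa using ds.length_eq.symm)
      subst hA₀
      exact ⟨hop ▸ dop⟩
  | var | app =>
    rw [ctreeL_eq_lam_nil (by simp)]
    rcases hhead with ⟨z, hB, hz⟩ | ⟨xs, c, hB, ⟨dop⟩⟩ <;> rw [hB]
    · exact ⟨.mk (A := .base) rfl (.var hz ds)⟩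
    · exact ⟨.mk (A := .base) rfl (.app dop ds)⟩

mutual
theorem ELong.lamDeriv : ∀ {Γ : Env} {M : Term} {A : Ty}, ELong Γ M A →
    Nonempty (LamDeriv Γ (ctreeL M) A)
  | _, _, _, .arrow hU => (ELong.lamDeriv hU).elim LamDeriv.abs
  | _, _, _, .base hs => (ESpine.partialSpine hs).lamDeriv
theorem ESpine.partialSpine : ∀ {Γ : Env} {M : Term} {A : Ty}, ESpine Γ M A →
    PartialSpine Γ M A
  | _, _, A, .var hz => ⟨A, [], [], rfl, ⟨.nil⟩, .inl ⟨_, by rw [ctreeB], hz⟩⟩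
  | _, .lam x U, .arrow A B, .head hl => by
      obtain ⟨d⟩ := ELong.lamDeriv hl
      obtain ⟨xs, c, h⟩ := ctreeL_eq_lam (.lam x U)
      rw [h] at d
      exact ⟨.arrow A B, [], [], rfl, ⟨.nil⟩,
        .inr ⟨xs, c, by rw [ctreeB_lam, h], ⟨d⟩⟩⟩
  | _, _, _, .app hU hV => (ELong.lamDeriv hV).elim (ESpine.partialSpine hU).app
end

/-! ### Pointer chains -/

theorem chainEnd_succ (s : List Occ) (f i : Nat) :
    chainEnd s (f + 1) i = match s[i]? with
      | none => none
      | some o => if o.dist = 0 then some i else chainEnd s f (i + o.dist) := rfl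

/-- Pointers go to strictly larger indices, so fuel beyond the remaining length is never
exhausted. -/
theorem chainEnd_fuel {s : List Occ} :
    ∀ {f f' i : Nat}, s.length ≤ i + f → s.length ≤ i + f' →
      chainEnd s f i = chainEnd s f' i
  | 0, 0, _, _, _ => rfl
  | 0, f' + 1, i, h, _ | f' + 1, 0, i, _, h => by
      simp [chainEnd, List.getElem?_eq_none (show s.length ≤ i by omega)]
  | f + 1, f' + 1, i, h, h' => by
      rw [chainEnd_succ, chainEnd_succ]
      rcases s[i]? with _ | o
      · rfl
      · by_cases hd : o.dist = 0
        · simp [hd]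
        · simp only [hd, if_false]
          exact chainEnd_fuel (by omega) (by omega)

theorem chainEnd_append (u v : List Occ) (f i : Nat) :
    chainEnd (u ++ v) f (u.length + i) = (chainEnd v f i).map (· + u.length) := by
  induction f generalizing i with
  | zero => rfl
  | succ f ih =>
    rw [chainEnd_succ, chainEnd_succ, List.getElem?_append_right (by omega),
      Nat.add_sub_cancel_left]
    rcases v[i]? with _ | o
    · rfl
    · by_cases hd : o.dist = 0
      · simp [hd, Nat.add_comm]
      · simp only [hd, if_false, Nat.add_assoc, ih]

theorem herEnd_cons {o : Occ} {s : List Occ} (h1 : 1 ≤ o.dist) (hd : o.dist ≤ s.length) :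
    herEnd (o :: s) 0 = (herEnd (s.drop (o.dist - 1)) 0).map (· + o.dist) := by
  have hsplit : o :: s = (o :: s).take o.dist ++ s.drop (o.dist - 1) := by
    conv_lhs => rw [← List.take_append_drop o.dist (o :: s)]
    obtain ⟨d, hd'⟩ : ∃ d, o.dist = d + 1 := ⟨o.dist - 1, by omega⟩
    simp [hd']
  have hlen : ((o :: s).take o.dist).length = o.dist := by simp; omega
  calc herEnd (o :: s) 0
      = chainEnd (o :: s) s.length o.dist := by
        rw [herEnd, List.length_cons, chainEnd_succ]
        simp [show o.dist ≠ 0 by omega]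
    _ = (chainEnd (s.drop (o.dist - 1)) s.length 0).map (· + o.dist) := by
        have h := chainEnd_append ((o :: s).take o.dist) (s.drop (o.dist - 1)) s.length 0
        rwa [← hsplit, hlen, Nat.add_zero] at h
    _ = _ := by
        rw [herEnd, chainEnd_fuel (f' := (s.drop (o.dist - 1)).length) (by simp) (by simp)]

/-- The common form of `HerRoot s 0` and `HerApp T s 0`. -/
def OriginSat (P : Occ → Prop) (s : List Occ) : Prop :=
  ∃ j u, herEnd s 0 = some j ∧ s[j]? = some u ∧ P u

theorem originSat_cons_iff {P : Occ → Prop} {o : Occ} {s : List Occ} (h1 : 1 ≤ o.dist)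
    (hd : o.dist ≤ s.length) :
    OriginSat P (o :: s) ↔ OriginSat P (s.drop (o.dist - 1)) := by
  have hget : ∀ j, (o :: s)[j + o.dist]? = (s.drop (o.dist - 1))[j]? := by
    intro j
    rw [List.getElem?_drop, show j + o.dist = (o.dist - 1 + j) + 1 by omega,
      List.getElem?_cons_succ]
  simp only [OriginSat, herEnd_cons h1 hd, Option.map_eq_some_iff]
  constructor
  · rintro ⟨_, u, ⟨j, hj, rfl⟩, hu, hP⟩
    exact ⟨j, u, hj, (hget j) ▸ hu, hP⟩
  · rintro ⟨j, u, hj, hu, hP⟩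
    exact ⟨j + o.dist, u, ⟨j, hj, rfl⟩, (hget j).symm ▸ hu, hP⟩

def SameOrigin (T : CT) (s s' : List Occ) : Prop :=
  (HerRoot s 0 ↔ HerRoot s' 0) ∧ (HerApp T s 0 ↔ HerApp T s' 0)

theorem SameOrigin.trans {T : CT} {s s' s'' : List Occ} (h : SameOrigin T s s')
    (h' : SameOrigin T s' s'') : SameOrigin T s s'' :=
  ⟨h.1.trans h'.1, h.2.trans h'.2⟩

theorem SameOrigin.symm {T : CT} {s s' : List Occ} (h : SameOrigin T s s') : SameOrigin T s' s :=
  ⟨h.1.symm, h.2.symm⟩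

theorem sameOrigin_cons_drop (T : CT) {o : Occ} {s : List Occ} (h1 : 1 ≤ o.dist)
    (hd : o.dist ≤ s.length) : SameOrigin T (o :: s) (s.drop (o.dist - 1)) :=
  ⟨originSat_cons_iff h1 hd, originSat_cons_iff h1 hd⟩

theorem not_herRoot_of_herApp {T : CT} {s : List Occ} (hT : kindAt T [] = some .lam)
    (hApp : HerApp T s 0) : ¬ HerRoot s 0 := by
  rintro ⟨j, u, hj, hu, hroot⟩
  obtain ⟨j', u', hj', hu', happ⟩ := hApp
  obtain rfl : j = j' := Option.some.inj (hj.symm.trans hj')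
  obtain rfl : u = u' := Option.some.inj (hu.symm.trans hu')
  rw [hroot] at happ
  exact absurd (hT.symm.trans happ) (by simp)

theorem sameOrigin_of_herRoot {T : CT} (hT : kindAt T [] = some .lam) {s s' : List Occ}
    (h : HerRoot s 0) (h' : HerRoot s' 0) : SameOrigin T s s' :=
  ⟨iff_of_true h h', iff_of_false (fun hA => not_herRoot_of_herApp hT hA h)
    (fun hA => not_herRoot_of_herApp hT hA h')⟩

/-! ### Binders -/

section Binders

variable {Γ₀ : Env} {T : CT} {A₀ : Ty}

def LamTypeAt (D : LamDeriv Γ₀ T A₀) (p : Pos) (A : Ty) : Prop :=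
  ∃ Δ t d, typedAt D p = some (.lam Δ t A d)

def SpineTypeAt (D : LamDeriv Γ₀ T A₀) (p : Pos) (A : Ty) : Prop :=
  ∃ Δ t d, typedAt D p = some (.spine Δ t A d)

/-- Binding indices `k` count from 1. -/
def Slot (D : LamDeriv Γ₀ T A₀) (bp : Pos) (k : Nat) (A : Ty) : Prop :=
  ∃ B, LamTypeAt D bp B ∧ B.args[k - 1]? = some A

/-- The environment `benv` of `binderGo` and the typing context `Δ` agree on bound names;
the remaining entries of `Δ` are the context `Γ₀` of the free variables. -/
def EnvRel (D : LamDeriv Γ₀ T A₀) (benv : List (Name × (Pos × Nat))) (Δ : Env) : Prop :=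
  ∃ Δ₁, Δ = Δ₁ ++ Γ₀ ∧
    List.Forall₂ (fun b e => b.1 = e.1 ∧ Slot D b.2.1 b.2.2 e.2) benv Δ₁

variable {D : LamDeriv Γ₀ T A₀}

theorem LamTypeAt.eq {p : Pos} {A B : Ty} (hA : LamTypeAt D p A) (hB : LamTypeAt D p B) :
    A = B := by
  obtain ⟨_, _, _, hA⟩ := hA
  obtain ⟨_, _, _, hB⟩ := hB
  cases hA.symm.trans hB
  rfl

theorem LamTypeAt.kindAt {p : Pos} {A : Ty} (h : LamTypeAt D p A) : kindAt T p = some .lam := by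
  obtain ⟨Δ, t, d, hp⟩ := h
  rw [kindAt_of_typedAt hp]
  obtain ⟨xs, c, rfl⟩ := d.eq_lam
  rfl

theorem SpineTypeAt.arityAt {p : Pos} {A : Ty} (h : SpineTypeAt D p A) :
    arityAt T p = A.args.length := by
  obtain ⟨Δ, t, d, hp⟩ := h
  rw [arityAt_of_typedAt hp]
  exact d.arity_eq

theorem EnvRel.lookup {benv : List (Name × (Pos × Nat))} {Δ : Env} (h : EnvRel D benv Δ)
    {z : Name} {bp : Pos} {k : Nat} (hz : benv.lookup z = some (bp, k)) :
    ∃ A, Δ.lookup z = some A ∧ Slot D bp k A := by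
  obtain ⟨Δ₁, rfl, hF⟩ := h
  obtain ⟨A, hA, hs⟩ := hF.lookup_eq_some (S := fun b A => Slot D b.1 b.2 A) hz
  exact ⟨A, by simp [List.lookup_append, hA], hs⟩

theorem EnvRel.push {p : Pos} {xs : List Name} {A : Ty} {benv : List (Name × (Pos × Nat))}
    {Δ : Env} (hp : LamTypeAt D p A) (hlen : xs.length = A.args.length) (h : EnvRel D benv Δ) :
    EnvRel D (((xs.zipIdx.map Prod.swap).map fun e => (e.2, (p, e.1 + 1))).reverse ++ benv)
      ((xs.zip A.args).reverse ++ Δ) := by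
  obtain ⟨Δ₁, rfl, hF⟩ := h
  refine ⟨(xs.zip A.args).reverse ++ Δ₁, by simp, List.rel_append ?_ hF⟩
  refine List.forall₂_reverse_iff.mpr (List.forall₂_of_length_eq_of_get (by simp [hlen]) ?_)
  intro i h₁ h₂
  simpa [List.getElem_zipIdx, List.getElem_zip] using ⟨A, hp, by simp⟩

theorem binderGo_child {p : Pos} {i i' : TypedNode} {k : Nat}
    (hp : typedAt D p = some i) (hk : i.child k = some i')
    {benv : List (Name × (Pos × Nat))} (hrel : EnvRel D benv i.env) :
    ∃ benv', EnvRel D benv' i'.env ∧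
      ∀ q, binderGo i.tree (k :: q) p benv = binderGo i'.tree q (p ++ [k]) benv' := by
  match i, k, hk with
  | .lam _ _ _ (.mk hlen _), 1, hk =>
      cases hk
      exact ⟨_, hrel.push ⟨_, _, _, hp⟩ hlen, fun q => rfl⟩
  | .spine _ _ _ (.app _ _), 0, hk =>
      cases hk
      exact ⟨benv, hrel, fun q => rfl⟩
  | .spine _ _ _ (.var _ ds), k + 1, hk | .spine _ _ _ (.app _ ds), k + 1, hk =>
      obtain ⟨x, hx, rfl⟩ := Option.map_eq_some_iff.mp hk
      exact ⟨benv, hrel, fun q => by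
        simp [TypedNode.tree, binderGo, (ds.get_eq_some k x hx).1]⟩

theorem binderGo_eq_of_typedAt {p : Pos} {i : TypedNode} (h : typedAt D p = some i) :
    ∃ benv, EnvRel D benv i.env ∧
      ∀ q, binderGo T (p ++ q) [] [] = binderGo i.tree q p benv := by
  induction p using List.reverseRecOn generalizing i with
  | nil => cases h; exact ⟨[], ⟨[], rfl, .nil⟩, fun q => rfl⟩
  | append_singleton p k ih =>
    rw [typedAt_append_singleton] at h
    obtain ⟨i₀, h₀, hk⟩ := Option.bind_eq_some_iff.mp h
    obtain ⟨benv, hrel, hgo⟩ := ih h₀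
    obtain ⟨benv', hrel', hgo'⟩ := binderGo_child h₀ hk hrel
    exact ⟨benv', hrel', fun q => by rw [List.append_assoc, hgo, ← hgo']; rfl⟩

theorem slot_of_binderInCT {p : Pos} {Δ : Env} {z : Name} {cs : List CT} {A : Ty}
    {d : SpineDeriv Δ (.var z cs) A} (hp : typedAt D p = some (.spine Δ (.var z cs) A d))
    {bp : Pos} {k : Nat} (hb : binderInCT T p = some (bp, k)) : Slot D bp k A := by
  obtain ⟨benv, hrel, hgo⟩ := binderGo_eq_of_typedAt hp
  have hz : benv.lookup z = some (bp, k) := by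
    rw [← hb, binderInCT, ← List.append_nil p, hgo]; rfl
  obtain ⟨A', hA', hslot⟩ := hrel.lookup hz
  cases d with
  | var hzA _ => rwa [show A = A' from Option.some.inj (hzA.symm.trans hA')]

end Binders

/-! ### The traversal invariant -/

section Invariant

variable {Γ₀ : Env} {T : CT} {A₀ : Ty}

def LamInv (D : LamDeriv Γ₀ T A₀) (o : Occ) (s : List Occ) (p : Pos) (A : Ty) : Prop :=
  (p = [] ∧ s = []) ∨
  (p ≠ [] ∧ SameOrigin T (o :: s) s ∧
    (HerApp T (o :: s) 0 → ∃ m s' pm, s = m :: s' ∧ m.node = .s pm ∧ SpineTypeAt D pm A))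

def VarInv (D : LamDeriv Γ₀ T A₀) (o : Occ) (s : List Occ) (A : Ty) : Prop :=
  1 ≤ o.dist ∧
    ∃ j bp, s[o.dist - 1]? = some j ∧ j.node = .s bp ∧ (bp = [] ∨ Slot D bp o.jlab A)

def NodeInv (D : LamDeriv Γ₀ T A₀) (o : Occ) (s : List Occ) (p : Pos) : TypedNode → Prop
  | .lam _ _ A _ => LamInv D o s p A
  | .spine _ (.var _ _) A _ => VarInv D o s A
  | .spine _ _ _ _ => o.dist = 0

def OccInv (D : LamDeriv Γ₀ T A₀) (o : Occ) (s : List Occ) : Prop :=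
  ∃ p i, o.node = .s p ∧ typedAt D p = some i ∧ NodeInv D o s p i

def TravInv (D : LamDeriv Γ₀ T A₀) (t : List Occ) : Prop :=
  ∀ o s, o :: s <:+ t → OccInv D o s

variable {D : LamDeriv Γ₀ T A₀}

theorem OccInv.lam {o : Occ} {s : List Occ} (h : OccInv D o s) (hk : o.node.kindIn T = some .lam) :
    ∃ p A, o.node = .s p ∧ LamTypeAt D p A ∧ LamInv D o s p A := by
  obtain ⟨p, i, hp, hi, hinv⟩ := h
  rw [hp, ENode.kindIn, kindAt_of_typedAt hi, Option.some.injEq] at hk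
  obtain ⟨Δ, t, A, d, rfl⟩ := TypedNode.eq_lam_of_kind hk
  exact ⟨p, A, hp, ⟨Δ, t, d, hi⟩, hinv⟩

theorem OccInv.lamInv {o : Occ} {s : List Occ} {p : Pos} {A : Ty} (h : OccInv D o s)
    (hp : o.node = .s p) (hA : LamTypeAt D p A) : LamInv D o s p A := by
  obtain ⟨Δ, t, d, hi⟩ := hA
  have hk : o.node.kindIn T = some .lam := by
    rw [hp, ENode.kindIn, kindAt_of_typedAt hi]
    obtain ⟨xs, c, rfl⟩ := d.eq_lam
    rfl
  obtain ⟨p', B, hp', hB, hinv⟩ := h.lam hk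
  obtain rfl : p = p' := ENode.s.inj (hp.symm.trans hp')
  rwa [LamTypeAt.eq ⟨Δ, t, d, hi⟩ hB]

theorem OccInv.var {o : Occ} {s : List Occ} (h : OccInv D o s) (hk : o.node.kindIn T = some .var) :
    ∃ p A, o.node = .s p ∧ SpineTypeAt D p A ∧ VarInv D o s A := by
  obtain ⟨p, i, hp, hi, hinv⟩ := h
  rw [hp, ENode.kindIn, kindAt_of_typedAt hi, Option.some.injEq] at hk
  obtain ⟨Δ, z, cs, A, d, rfl⟩ := TypedNode.eq_var_of_kind hk
  exact ⟨p, A, hp, ⟨Δ, _, d, hi⟩, hinv⟩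

theorem OccInv.app {o : Occ} {s : List Occ} (h : OccInv D o s) (hk : o.node.kindIn T = some .app) :
    ∃ p Δ op cs A d, o.node = .s p ∧ typedAt D p = some (.spine Δ (.app op cs) A d) ∧
      o.dist = 0 := by
  obtain ⟨p, i, hp, hi, hinv⟩ := h
  rw [hp, ENode.kindIn, kindAt_of_typedAt hi, Option.some.injEq] at hk
  obtain ⟨Δ, op, cs, A, d, rfl⟩ := TypedNode.eq_app_of_kind hk
  exact ⟨p, Δ, op, cs, A, d, hp, hi, hinv⟩

theorem OccInv.kind {o : Occ} {s : List Occ} (h : OccInv D o s) :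
    ∃ k, o.node.kindIn T = some k := by
  obtain ⟨p, i, hp, hi, -⟩ := h
  exact ⟨_, by rw [hp, ENode.kindIn, kindAt_of_typedAt hi]⟩

theorem TravInv.head {o : Occ} {s : List Occ} (h : TravInv D (o :: s)) : OccInv D o s :=
  h o s (List.suffix_refl _)

theorem TravInv.of_suffix {t t' : List Occ} (h : TravInv D t) (ht : t' <:+ t) : TravInv D t' :=
  fun o s hs => h o s (hs.trans ht)

theorem TravInv.cons {o : Occ} {s : List Occ} (hI : OccInv D o s) (ht : TravInv D s) :
    TravInv D (o :: s) := by
  intro o' s' hs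
  rcases List.suffix_cons_iff.mp hs with heq | hs'
  · obtain ⟨rfl, rfl⟩ := List.cons.inj heq
    exact hI
  · exact ht o' s' hs'

theorem TravInv.isGhost_eq_false {t : List Occ} (h : TravInv D t) {o : Occ} (ho : o ∈ t) :
    o.node.isGhost = false := by
  obtain ⟨l, s, rfl⟩ := List.append_of_mem ho
  obtain ⟨p, _, hp, -⟩ := h o s ⟨l, rfl⟩
  rw [hp]
  rfl

theorem TravInv.var_justifier {n : Occ} {s : List Occ} (ht : TravInv D (n :: s))
    (hk : n.node.kindIn T = some .var) :
    ∃ pn A j bp B, n.node = .s pn ∧ SpineTypeAt D pn A ∧ 1 ≤ n.dist ∧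
      s.drop (n.dist - 1) = j :: s.drop n.dist ∧ j.node = .s bp ∧ LamTypeAt D bp B ∧
      LamInv D j (s.drop n.dist) bp B ∧ (bp = [] ∨ B.args[n.jlab - 1]? = some A) := by
  obtain ⟨pn, A, hpn, hA, hd, j, bp, hj, hbp, hslot⟩ := ht.head.var hk
  have hdrop : s.drop (n.dist - 1) = j :: s.drop n.dist := by
    rw [List.drop_eq_getElem_cons (List.getElem?_eq_some_iff.mp hj).1,
      (List.getElem?_eq_some_iff.mp hj).2, show n.dist - 1 + 1 = n.dist by omega]
  have hB : ∃ B, LamTypeAt D bp B ∧ (bp = [] ∨ B.args[n.jlab - 1]? = some A) := by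
    rcases hslot with rfl | ⟨B, hB, hargs⟩
    · exact ⟨A₀, ⟨_, _, _, typedAt_nil D⟩, .inl rfl⟩
    · exact ⟨B, hB, .inr hargs⟩
  obtain ⟨B, hB, hargs⟩ := hB
  have hjs : j :: s.drop n.dist <:+ n :: s :=
    hdrop ▸ (List.drop_suffix _ _).trans (List.suffix_cons n s)
  exact ⟨pn, A, j, bp, B, hpn, hA, hd, hdrop, hbp, hB, (ht.of_suffix hjs).head.lamInv hbp hB,
    hargs⟩

theorem TravInv.grandjustifier {n m : Occ} {s : List Occ} (ht : TravInv D (n :: s))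
    (hk : n.node.kindIn T = some .var) (hApp : HerApp T (n :: s) 0)
    (hm : s[n.dist]? = some m) :
    ∃ pn A pm B, n.node = .s pn ∧ SpineTypeAt D pn A ∧
      m.node = .s pm ∧ SpineTypeAt D pm B ∧ B.args[n.jlab - 1]? = some A ∧
      SameOrigin T (n :: s) (s.drop n.dist) := by
  obtain ⟨pn, A, j, bp, B, hpn, hA, hd, hdrop, -, -, hinv, hargs⟩ := ht.var_justifier hk
  have hdrop' : s.drop n.dist = m :: s.drop (n.dist + 1) := by
    rw [List.drop_eq_getElem_cons (List.getElem?_eq_some_iff.mp hm).1,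
      (List.getElem?_eq_some_iff.mp hm).2]
  have hlen : n.dist ≤ s.length := (List.getElem?_eq_some_iff.mp hm).1.le
  have hn : SameOrigin T (n :: s) (j :: s.drop n.dist) :=
    hdrop ▸ sameOrigin_cons_drop T (by omega) hlen
  rcases hinv with ⟨-, hnil⟩ | ⟨hbp, hj, htyped⟩
  · exact absurd (hdrop'.symm.trans hnil) (by simp)
  obtain ⟨m', s', pm, hms, hpm, hB⟩ := htyped (hn.2.mp hApp)
  obtain ⟨rfl, -⟩ := List.cons.inj (hdrop'.symm.trans hms)
  exact ⟨pn, A, pm, B, hpn, hA, hpm, hB, hargs.resolve_left hbp, hn.trans hj⟩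

end Invariant

section Preservation

variable {Γ₀ : Env} {T : CT} {A₀ : Ty} {D : LamDeriv Γ₀ T A₀}

theorem TravInv.justifier_lam {o : Occ} {s : List Occ} (ht : TravInv D (o :: s))
    (hk : o.node.kindIn T = some .var) :
    ∃ j, 1 ≤ o.dist ∧ s[o.dist - 1]? = some j ∧ j.node.kindIn T = some .lam := by
  obtain ⟨-, -, j, bp, B, -, -, hd, hdrop, hbp, hB, -⟩ := ht.var_justifier hk
  refine ⟨j, hd, by rw [← List.head?_drop, hdrop]; rfl, ?_⟩
  rw [hbp, ENode.kindIn, hB.kindAt]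

theorem TravInv.herRoot_of_lam {o : Occ} {s : List Occ} (ht : TravInv D (o :: s))
    (hk : o.node.kindIn T = some .lam) (hr : HerRoot (o :: s) 0) : s = [] ∨ HerRoot s 0 := by
  obtain ⟨p, A, -, -, hinv⟩ := ht.head.lam hk
  rcases hinv with ⟨-, rfl⟩ | ⟨-, hsame, -⟩
  · exact .inl rfl
  · exact .inr (hsame.1.mp hr)

theorem TravInv.herRoot_of_var {o : Occ} {s : List Occ} (ht : TravInv D (o :: s))
    (hk : o.node.kindIn T = some .var) (hr : HerRoot (o :: s) 0) :
    s.drop o.dist = [] ∨ HerRoot (s.drop o.dist) 0 := by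
  obtain ⟨-, -, j, bp, B, -, -, hd, hdrop, hbp, hB, -⟩ := ht.var_justifier hk
  have hlen : o.dist ≤ s.length := by
    have := congrArg List.length hdrop
    simp at this
    omega
  have hjs : j :: s.drop o.dist <:+ o :: s :=
    hdrop ▸ (List.drop_suffix _ _).trans (List.suffix_cons o s)
  exact (ht.of_suffix hjs).herRoot_of_lam (by rw [hbp, ENode.kindIn, hB.kindAt])
    (hdrop ▸ (sameOrigin_cons_drop T hd hlen).1.mp hr)

/-- The O-view only moves to λ-predecessors and to justifiers of variables, and both steps keep
the origin of the pointer chain. -/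
theorem TravInv.herRoot_drop_of_mem_oviewIdx : ∀ {s : List Occ}, TravInv D s → HerRoot s 0 →
    ∀ {jm : Nat} {m : Occ}, jm ∈ oviewIdx T s → s[jm]? = some m →
      m.node.kindIn T = some .var → HerRoot (s.drop jm) 0
  | [], _, _, _, _, hjm, _, _ => by simp [oviewIdx] at hjm
  | o :: s, ht, hr, jm, m, hjm, hm, hmk => by
    obtain ⟨k, hk⟩ := ht.head.kind
    cases k with
    | lam =>
      rw [oviewIdx, if_pos hk] at hjm
      rcases List.mem_cons.mp hjm with rfl | hjm
      · cases hm
        cases hk.symm.trans hmk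
      obtain ⟨j, hj, rfl⟩ := List.mem_map.mp hjm
      rcases ht.herRoot_of_lam hk hr with rfl | hr'
      · simp [oviewIdx] at hj
      exact TravInv.herRoot_drop_of_mem_oviewIdx (ht.of_suffix (List.suffix_cons o s)) hr' hj
        hm hmk
    | var =>
      obtain ⟨j, hd, hj, hjk⟩ := ht.justifier_lam hk
      rw [oviewIdx, if_neg (by simp [hk]), if_neg (by omega)] at hjm
      rcases List.mem_cons.mp hjm with rfl | hjm
      · exact hr
      rcases List.mem_cons.mp hjm with rfl | hjm
      · rw [show o.dist = o.dist - 1 + 1 by omega, List.getElem?_cons_succ, hj] at hm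
        cases hm
        cases hjk.symm.trans hmk
      obtain ⟨j', hj', rfl⟩ := List.mem_map.mp hjm
      rcases ht.herRoot_of_var hk hr with hnil | hr'
      · simp [hnil, oviewIdx] at hj'
      have hsuf : s.drop o.dist <:+ o :: s := (List.drop_suffix _ _).trans (List.suffix_cons o s)
      have ih := TravInv.herRoot_drop_of_mem_oviewIdx (ht.of_suffix hsuf) hr' hj' (m := m)
        (by rwa [List.getElem?_drop, Nat.add_comm, ← List.getElem?_cons_succ]) hmk
      rwa [List.drop_drop, Nat.add_comm] at ih
    | app =>
      obtain ⟨-, -, -, -, -, -, -, -, hd⟩ := ht.head.app hk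
      rw [oviewIdx, if_neg (by simp [hk]), if_pos hd] at hjm
      obtain rfl := List.mem_singleton.mp hjm
      cases hm
      cases hk.symm.trans hmk
termination_by s => s.length
decreasing_by all_goals simp; try omega

theorem travInv_root (D : LamDeriv Γ₀ T A₀) : TravInv D [rootOcc] :=
  TravInv.cons ⟨[], _, rfl, typedAt_nil D, .inl ⟨rfl, rfl⟩⟩ (fun _ _ h => by simp at h)

theorem TravInv.cons_app {o : Occ} {s : List Occ} {p : Pos} (ht : TravInv D (o :: s))
    (ho : o.node = .s p) (hk : kindAt T p = some .app) :
    TravInv D (⟨.s (p ++ [0]), 1, 0, []⟩ :: o :: s) := by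
  obtain ⟨p', Δ, op, cs, A, d, hp', hi, -⟩ := ht.head.app (by rw [ho]; exact hk)
  obtain rfl : p = p' := ENode.s.inj (ho.symm.trans hp')
  obtain ⟨d', hop⟩ := typedAt_operator hi
  have hsame := sameOrigin_cons_drop T (o := ⟨.s (p ++ [0]), 1, 0, []⟩) (s := o :: s) le_rfl
    (by simp)
  exact TravInv.cons ⟨p ++ [0], _, rfl, hop,
    .inr ⟨by simp, by simpa using hsame, fun _ => ⟨o, s, p, rfl, ho, _, _, d, hi⟩⟩⟩ ht

theorem TravInv.cons_lamApp {o : Occ} {s : List Occ} {p : Pos} (ht : TravInv D (o :: s))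
    (ho : o.node = .s p) (hk : kindAt T p = some .lam) (hk1 : kindAt T (p ++ [1]) = some .app) :
    TravInv D (⟨.s (p ++ [1]), 0, 0, []⟩ :: o :: s) := by
  obtain ⟨p', A, hp', ⟨Δ, t, d, hi⟩, -⟩ := ht.head.lam (by rw [ho]; exact hk)
  obtain rfl : p = p' := ENode.s.inj (ho.symm.trans hp')
  obtain ⟨xs, c, B, d', rfl, hbody⟩ := typedAt_body hi
  refine TravInv.cons ⟨p ++ [1], _, rfl, hbody, ?_⟩ ht
  rw [kindAt_of_typedAt hbody] at hk1
  cases c with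
  | var => cases hk1
  | lam | app => rfl

theorem slot_of_enablesS {p bp : Pos} {k : Nat} {Δ : Env} {z : Name} {cs : List CT} {B : Ty}
    {d : SpineDeriv Δ (.var z cs) B} (hq : typedAt D (p ++ [1]) = some (.spine Δ (.var z cs) B d))
    (hp : kindAt T p = some .lam) (h : EnablesS T bp k (p ++ [1])) : bp = [] ∨ Slot D bp k B := by
  rcases h with ⟨heq, -, hbp⟩ | ⟨-, hb⟩ | ⟨-, rfl, -⟩
  · obtain ⟨rfl, -⟩ := List.append_inj' heq rfl
    rcases hbp with hbp | hbp <;> cases hp.symm.trans hbp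
  · exact .inr (slot_of_binderInCT hq hb)
  · exact .inl rfl

theorem TravInv.cons_lamVar {o j : Occ} {s : List Occ} {p bp : Pos} {d k : Nat}
    (ht : TravInv D (o :: s)) (ho : o.node = .s p) (hk : kindAt T p = some .lam)
    (hk1 : kindAt T (p ++ [1]) = some .var) (hd : 1 ≤ d) (hj : (o :: s)[d - 1]? = some j)
    (hjn : j.node = .s bp) (hen : EnablesS T bp k (p ++ [1])) :
    TravInv D (⟨.s (p ++ [1]), d, k, []⟩ :: o :: s) := by
  obtain ⟨p', A, hp', ⟨Δ, t, dl, hi⟩, -⟩ := ht.head.lam (by rw [ho]; exact hk)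
  obtain rfl : p = p' := ENode.s.inj (ho.symm.trans hp')
  obtain ⟨xs, c, B, d', rfl, hbody⟩ := typedAt_body hi
  rw [kindAt_of_typedAt hbody, Option.some.injEq] at hk1
  obtain ⟨Δ', z, cs, B, d', hbody'⟩ := TypedNode.eq_var_of_kind hk1
  rw [hbody'] at hbody
  exact TravInv.cons
    ⟨p ++ [1], _, rfl, hbody, hd, j, bp, hj, hjn, slot_of_enablesS hbody hk hen⟩ ht

theorem TravInv.jlab_le_arityIn {n m : Occ} {s : List Occ} (ht : TravInv D (n :: s))
    (hk : n.node.kindIn T = some .var) (hApp : HerApp T (n :: s) 0) (hm : s[n.dist]? = some m) :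
    n.jlab ≤ m.node.arityIn T := by
  obtain ⟨_, _, pm, B, _, _, hpm, hB, hargs, _⟩ := ht.grandjustifier hk hApp hm
  have := (List.getElem?_eq_some_iff.mp hargs).1
  rw [hpm, ENode.arityIn, hB.arityAt]
  omega

theorem TravInv.cons_varC {n m : Occ} {s : List Occ} {q : Pos} (ht : TravInv D (n :: s))
    (hk : n.node.kindIn T = some .var) (hApp : HerApp T (n :: s) 0) (hjl : 1 ≤ n.jlab)
    (hm : s[n.dist]? = some m) (hq : m.node = .s q) :
    TravInv D (⟨.s (q ++ [n.jlab]), n.dist + 2, n.jlab, []⟩ :: n :: s) := by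
  obtain ⟨pn, A, pm, B, hpn, hA, hpm, ⟨Δ, t, d, hB⟩, hargs, horig⟩ :=
    ht.grandjustifier hk hApp hm
  obtain rfl : q = pm := ENode.s.inj (hq.symm.trans hpm)
  obtain ⟨c, B', d', hB', hnew⟩ :=
    typedAt_operand hB hjl (by have := (List.getElem?_eq_some_iff.mp hargs).1; omega)
  obtain rfl : B' = A := Option.some.inj (hB'.symm.trans hargs)
  have hlen := (List.getElem?_eq_some_iff.mp hm).1
  have hsame := sameOrigin_cons_drop T (o := ⟨.s (q ++ [n.jlab]), n.dist + 2, n.jlab, []⟩)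
    (s := n :: s) (by simp) (by simp; omega)
  exact TravInv.cons ⟨_, _, rfl, hnew,
    .inr ⟨by simp, hsame.trans horig.symm, fun _ => ⟨n, s, pn, rfl, hpn, hA⟩⟩⟩ ht

theorem TravInv.cons_ivarC {n m : Occ} {s : List Occ} {q : Pos} {jm i : Nat}
    (ht : TravInv D (n :: s)) (hr : HerRoot (n :: s) 0) (hi : 1 ≤ i) (hm : (n :: s)[jm]? = some m)
    (hmk : m.node.kindIn T = some .var) (hjm : jm ∈ oviewIdx T (n :: s)) (hq : m.node = .s q)
    (hle : i ≤ arityAt T q) : TravInv D (⟨.s (q ++ [i]), jm + 1, i, []⟩ :: n :: s) := by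
  have hms : m :: (n :: s).drop (jm + 1) <:+ n :: s := by
    obtain ⟨hlt, hget⟩ := List.getElem?_eq_some_iff.mp hm
    rw [← hget, ← List.drop_eq_getElem_cons hlt]
    exact List.drop_suffix _ _
  obtain ⟨q', A, hq', ⟨Δ, t, d, hA⟩, -⟩ := (ht.of_suffix hms).head.var hmk
  obtain rfl : q = q' := ENode.s.inj (hq.symm.trans hq')
  obtain ⟨c, B, d', -, hnew⟩ :=
    typedAt_operand hA hi (by rwa [SpineTypeAt.arityAt ⟨Δ, t, d, hA⟩] at hle)
  have hsame := sameOrigin_cons_drop T (o := ⟨.s (q ++ [i]), jm + 1, i, []⟩)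
    (s := n :: s) (by simp) (by simpa using (List.getElem?_eq_some_iff.mp hm).1)
  have hnew_root : HerRoot (⟨.s (q ++ [i]), jm + 1, i, []⟩ :: n :: s) 0 :=
    hsame.1.mpr (by simpa using ht.herRoot_drop_of_mem_oviewIdx hr hjm hm hmk)
  exact TravInv.cons ⟨_, _, rfl, hnew,
    .inr ⟨by simp, sameOrigin_of_herRoot (kindAt_root D) hnew_root hr,
      fun hApp => absurd hnew_root (not_herRoot_of_herApp (kindAt_root D) hApp)⟩⟩ ht

end Preservation

theorem TravNoEtaIVar.travInv {Γ₀ : Env} {T : CT} {A₀ : Ty} (D : LamDeriv Γ₀ T A₀) {t : List Occ}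
    (h : TravNoEtaIVar T t) : TravInv D t := by
  induction h with
  | root => exact travInv_root D
  | app _ ho hk ih => exact ih.cons_app ho hk
  | lamApp _ ho hk hk1 ih => exact ih.cons_lamApp ho hk hk1
  | lamVar _ ho hk hk1 hd hj hjn hen _ ih => exact ih.cons_lamVar ho hk hk1 hd hj hjn hen
  | lamGhost _ _ hghost _ _ _ _ _ _ ih =>
    obtain ⟨p, _, hp, -⟩ := ih.head
    simp [hp, ENode.isGhost] at hghost
  | varC _ hk hApp _ hjl _ _ hm _ hq _ ih => exact ih.cons_varC hk hApp hjl hm hq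
  | varE _ _ hk hApp _ _ _ _ hm _ harity ih =>
    exact absurd harity (not_lt.mpr (ih.jlab_le_arityIn hk hApp hm))
  | ivarC _ _ _ hr hi hm hmk hjm _ _ hq hle ih =>
    exact ih.cons_ivarC (hr rfl) hi hm hmk hjm hq hle
  | ivarE hflag => cases hflag

theorem TravR.mono {T : CT} {cfg cfg' : TravCfg} (hbranch : cfg.branch = cfg'.branch)
    (hbound : cfg.bound = cfg'.bound) (hvar : cfg.etaVar = true → cfg'.etaVar = true)
    (hivar : cfg.etaIVar = true → cfg'.etaIVar = true)
    (hghost : cfg.ghostLam = true → cfg'.ghostLam = true) {t : List Occ} (h : TravR T cfg t) :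
    TravR T cfg' t := by
  induction h with
  | root => exact .root
  | app _ h1 h2 ih => exact .app ih h1 h2
  | lamApp _ h1 h2 h3 ih => exact .lamApp ih h1 h2 h3
  | lamVar _ h1 h2 h3 h4 h5 h6 h7 h8 ih => exact .lamVar ih h1 h2 h3 h4 h5 h6 h7 h8
  | lamGhost hf _ h1 h2 h3 h4 h5 h6 h7 ih => exact .lamGhost (hghost hf) ih h1 h2 h3 h4 h5 h6 h7
  | varC _ h1 h2 h3 h4 h5 h6 h7 h8 h9 h10 ih => exact .varC ih h1 h2 h3 h4 h5 h6 h7 h8 h9 h10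
  | varE hf _ h1 h2 h3 h4 h5 h6 h7 h8 h9 ih => exact .varE (hvar hf) ih h1 h2 h3 h4 h5 h6 h7 h8 h9
  | ivarC _ h1 h2 h3 h4 h5 h6 h7 h8 h9 h10 h11 ih =>
    rw [hbranch, hbound] at *
    exact .ivarC ih h1 h2 h3 h4 h5 h6 h7 h8 h9 h10 h11
  | ivarE hf _ h1 h2 h3 h4 h5 h6 h7 h8 h9 h10 ih =>
    rw [hbranch, hbound] at *
    exact .ivarE (hivar hf) ih h1 h2 h3 h4 h5 h6 h7 h8 h9 h10

theorem TravSTLC.travNoEtaIVar {T : CT} {t : List Occ} (h : TravSTLC T t) : TravNoEtaIVar T t :=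
  TravR.mono (cfg := ⟨false, false, false, false, false⟩)
    (cfg' := ⟨false, false, true, false, true⟩) rfl rfl (fun _ => rfl) id (fun _ => rfl) h

theorem TravNoEtaIVar.travSTLC {Γ₀ : Env} {T : CT} {A₀ : Ty} (D : LamDeriv Γ₀ T A₀)
    {t : List Occ} (h : TravNoEtaIVar T t) : TravSTLC T t := by
  induction h with
  | root => exact .root
  | app _ h1 h2 ih => exact .app ih h1 h2
  | lamApp _ h1 h2 h3 ih => exact .lamApp ih h1 h2 h3
  | lamVar _ h1 h2 h3 h4 h5 h6 h7 h8 ih => exact .lamVar ih h1 h2 h3 h4 h5 h6 h7 h8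
  | lamGhost _ h hghost =>
    obtain ⟨p, _, hp, -⟩ := (TravNoEtaIVar.travInv D h).head
    simp [hp, ENode.isGhost] at hghost
  | varC _ h1 h2 h3 h4 h5 h6 h7 h8 h9 h10 ih => exact .varC ih h1 h2 h3 h4 h5 h6 h7 h8 h9 h10
  | varE _ h hk hApp _ _ _ _ hm _ harity =>
    exact absurd harity (not_lt.mpr ((TravNoEtaIVar.travInv D h).jlab_le_arityIn hk hApp hm))
  | ivarC _ h1 h2 h3 h4 h5 h6 h7 h8 h9 h10 h11 ih =>
    exact .ivarC ih h1 h2 h3 h4 h5 h6 h7 h8 h9 h10 h11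
  | ivarE hflag => cases hflag

end ULC

namespace Stmt3
open ULC

/-- For a simply-typed term-in-context in eta-long form
`E = ⌊M⌋`, the STLC traversals of `E` (rules of Table 1 without the ghost
rule `Lam^ghost` and without the eta-expanded subcases of `Var` and `IVar`)
coincide with the traversals of `E` generated by all rules except the
eta-expanded subcase of `IVar`; in particular no traversal in this set
contains a ghost node (so the condition `i > |m|` in rule `Var` never
arises). -/
theorem stlc_traversals_coincide (Γ : List (Name × Ty)) (E : Term) (A : Ty)
    (h : ELong Γ E A) :
    (∀ s, TravSTLC (ctree E) s ↔ TravNoEtaIVar (ctree E) s) ∧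
    (∀ s, TravNoEtaIVar (ctree E) s → ∀ o ∈ s, o.node.isGhost = false) := by
  obtain ⟨D⟩ := h.lamDeriv
  exact ⟨fun s => ⟨TravSTLC.travNoEtaIVar, TravNoEtaIVar.travSTLC D⟩,
    fun s hs _ ho => (TravNoEtaIVar.travInv D hs).isGhost_eq_false ho⟩

end Stmt3
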